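/- arXiv:2203.05261 — 8 statements merged into one kernel-verified Lean document; each statement's English description precedes it below -/
import Mathlib

section
/- Let d ≥ 1, let f : ℝ^d → ℝ be an affine function (f(x) = aᵀx + b for some a ∈ ℝ^d, b ∈ ℝ), let v_1, …, v_{d+1} ∈ ℝ^d be affinely independent, and let s = conv(v_1, …, v_{d+1}) be the corresponding d-simplex. Then for every integer p ≥ 0, ∫_s f(x)^p dx = vol(s) · C(p+d, d)^{-1} · Σ_{k ∈ ℕ^{d+1}, k_1+⋯+k_{d+1} = p} f(v_1)^{k_1} ⋯ f(v_{d+1})^{k_{d+1}}, where C(p+d, d) is the binomial coefficient. -/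
/-!
Pull the integral back to the corner simplex `{t ≥ 0, ∑ tᵢ ≤ 1}` along `t ↦ ∑ᵢ λᵢ(t) vᵢ`, where
`λ(t) = (t, 1 - ∑ tᵢ)` are barycentric coordinates; this map is affine with constant Jacobian, and
`f` becomes `∑ᵢ λᵢ f(vᵢ)`. The multinomial theorem then reduces everything to Dirichlet's integral
`∫ ∏ λᵢ ^ kᵢ = ∏ kᵢ! / (∑ kᵢ + d)!`, proved by slicing off the first coordinate, rescaling the
slice to the unit corner and evaluating a Beta integral. The multinomial coefficients cancel the
`∏ kᵢ!`, leaving `p! / (p + d)! · ∑ₖ ∏ f(vᵢ) ^ kᵢ`, and `p = 0` gives `vol s = |Jacobian| / d!`.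
-/

open MeasureTheory

section

open Finset Nat

variable {n : ℕ}

def cornerSimplex (n : ℕ) (r : ℝ) : Set (Fin n → ℝ) := {t | (∀ i, 0 ≤ t i) ∧ ∑ i, t i ≤ r}

/-- Barycentric coordinates with respect to the vertices `e₁, …, eₙ, 0` of `cornerSimplex n 1`. -/
def cornerWeights {n : ℕ} (t : Fin n → ℝ) : Fin (n + 1) → ℝ := Fin.snoc t (1 - ∑ i, t i)

theorem isClosed_cornerSimplex (n : ℕ) (r : ℝ) : IsClosed (cornerSimplex n r) := by
  simp only [cornerSimplex, Set.ofPred_and, Set.ofPred_forall]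
  exact (isClosed_iInter fun i => isClosed_le continuous_const (continuous_apply i)).inter
    (isClosed_le (by fun_prop) continuous_const)

theorem measurableSet_cornerSimplex (n : ℕ) (r : ℝ) : MeasurableSet (cornerSimplex n r) :=
  (isClosed_cornerSimplex n r).measurableSet

theorem isCompact_cornerSimplex (n : ℕ) (r : ℝ) : IsCompact (cornerSimplex n r) := by
  refine (isCompact_Icc (a := 0) (b := fun _ => r)).of_isClosed_subset
    (isClosed_cornerSimplex n r) fun t ht => ⟨ht.1, fun i => ?_⟩
  exact (single_le_sum (fun j _ => ht.1 j) (mem_univ i)).trans ht.2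

theorem smul_mem_cornerSimplex_iff {r : ℝ} (hr : 0 < r) {u : Fin n → ℝ} :
    r • u ∈ cornerSimplex n r ↔ u ∈ cornerSimplex n 1 := by
  simp only [cornerSimplex, Set.mem_ofPred_eq, Pi.smul_apply, smul_eq_mul, ← mul_sum,
    mul_nonneg_iff_of_pos_left hr, mul_le_iff_le_one_right hr]

theorem setIntegral_cornerSimplex_eq_pow_mul {r : ℝ} (hr : 0 < r) (g : (Fin n → ℝ) → ℝ) :
    ∫ u in cornerSimplex n r, g u = r ^ n * ∫ u in cornerSimplex n 1, g (r • u) := by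
  have hind : (fun u => (cornerSimplex n 1).indicator (fun u => g (r • u)) u) =
      fun u => (cornerSimplex n r).indicator g (r • u) := by
    ext u
    by_cases hu : u ∈ cornerSimplex n 1
    · simp [hu, (smul_mem_cornerSimplex_iff hr).2 hu]
    · simp [hu, mt (smul_mem_cornerSimplex_iff hr).1 hu]
  rw [← integral_indicator (measurableSet_cornerSimplex n 1), hind,
    Measure.integral_comp_smul, Module.finrank_fin_fun,
    integral_indicator (measurableSet_cornerSimplex n r), smul_eq_mul,
    abs_of_pos (inv_pos.2 (pow_pos hr n)), mul_inv_cancel_left₀ (pow_pos hr n).ne']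

theorem cons_mem_cornerSimplex_iff {s : ℝ} {u : Fin n → ℝ} :
    (Fin.cons s u : Fin (n + 1) → ℝ) ∈ cornerSimplex (n + 1) 1 ↔
      0 ≤ s ∧ u ∈ cornerSimplex n (1 - s) := by
  simp only [cornerSimplex, Set.mem_ofPred_eq, Fin.forall_fin_succ, Fin.sum_univ_succ,
    Fin.cons_zero, Fin.cons_succ, and_assoc, le_sub_iff_add_le']

theorem nonneg_of_mem_cornerSimplex {r : ℝ} {t : Fin n → ℝ} (ht : t ∈ cornerSimplex n r) :
    0 ≤ r :=
  (sum_nonneg fun i _ => ht.1 i).trans ht.2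

theorem setIntegral_cornerSimplex_succ {G : (Fin (n + 1) → ℝ) → ℝ}
    (hG : IntegrableOn G (cornerSimplex (n + 1) 1)) :
    ∫ x in cornerSimplex (n + 1) 1, G x =
      ∫ s in Set.Ioo 0 1, ∫ u in cornerSimplex n (1 - s), G (Fin.cons s u) := by
  set e := (MeasurableEquiv.piFinSuccAbove (fun _ : Fin (n + 1) => ℝ) 0).symm
  have hmp : MeasurePreserving e := (volume_preserving_piFinSuccAbove _ 0).symm
  have he : ∀ y, e y = Fin.cons y.1 y.2 := fun y => by
    simp [e, MeasurableEquiv.piFinSuccAbove_symm_apply, Fin.consEquiv]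
  have hpoint : ∀ s u, (cornerSimplex (n + 1) 1).indicator G (Fin.cons s u) =
      (Set.Icc 0 1).indicator
        (fun s => (cornerSimplex n (1 - s)).indicator (fun u => G (Fin.cons s u)) u) s := by
    intro s u
    by_cases hx : (Fin.cons s u : Fin (n + 1) → ℝ) ∈ cornerSimplex (n + 1) 1
    · obtain ⟨hs, hu⟩ := cons_mem_cornerSimplex_iff.1 hx
      have hs' : s ∈ Set.Icc 0 1 := ⟨hs, sub_nonneg.1 (nonneg_of_mem_cornerSimplex hu)⟩
      rw [Set.indicator_of_mem hx, Set.indicator_of_mem hs', Set.indicator_of_mem hu]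
    · rw [Set.indicator_of_notMem hx]
      by_cases hs : s ∈ Set.Icc 0 1
      · rw [Set.indicator_of_mem hs, Set.indicator_of_notMem
          fun hu => hx (cons_mem_cornerSimplex_iff.2 ⟨hs.1, hu⟩)]
      · rw [Set.indicator_of_notMem hs]
  have hslice : ∀ s, ∫ u, (cornerSimplex (n + 1) 1).indicator G (Fin.cons s u) =
      (Set.Icc 0 1).indicator (fun s => ∫ u in cornerSimplex n (1 - s), G (Fin.cons s u)) s := by
    intro s
    by_cases hs : s ∈ Set.Icc 0 1
    · simp_rw [hpoint, Set.indicator_of_mem hs]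
      exact integral_indicator (measurableSet_cornerSimplex _ _)
    · simp_rw [hpoint, Set.indicator_of_notMem hs, integral_zero]
  rw [← integral_indicator (measurableSet_cornerSimplex _ _),
    ← hmp.integral_comp e.measurableEmbedding, Measure.volume_eq_prod, integral_prod]
  · simp_rw [he, hslice]
    rw [integral_indicator measurableSet_Icc, integral_Icc_eq_integral_Ioo]
  · exact (hmp.integrable_comp_emb e.measurableEmbedding).2
      ((integrable_indicator_iff (measurableSet_cornerSimplex _ _)).2 hG)

@[fun_prop]
theorem continuous_cornerWeights : Continuous (cornerWeights (n := n)) :=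
  Continuous.finSnoc (A := fun _ => ℝ) continuous_id
    (continuous_const.sub (continuous_finsetSum _ fun i _ => continuous_apply i))

theorem cornerWeights_cons_smul (s : ℝ) (u : Fin n → ℝ) :
    cornerWeights (Fin.cons s ((1 - s) • u)) = Fin.cons s ((1 - s) • cornerWeights u) := by
  ext i
  refine Fin.cases ?_ (fun j => Fin.lastCases ?_ (fun j => ?_) j) i <;>
    simp [cornerWeights, Fin.sum_univ_succ, ← Fin.cons_snoc_eq_snoc_cons, ← mul_sum]
  ring

theorem integral_pow_mul_one_sub_pow (j m : ℕ) :
    ∫ t in (0 : ℝ)..1, t ^ j * (1 - t) ^ m = (j ! * m ! : ℝ) / (j + m + 1)! := by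
  have hB : Complex.betaIntegral (j + 1) (m + 1) = ↑(∫ t in (0 : ℝ)..1, t ^ j * (1 - t) ^ m) := by
    rw [Complex.betaIntegral, ← intervalIntegral.integral_ofReal]
    simp only [add_sub_cancel_right, Complex.cpow_natCast]
    push_cast
    rfl
  have h := Complex.Gamma_mul_Gamma_eq_betaIntegral (s := j + 1) (t := m + 1)
    (by simp; positivity) (by simp; positivity)
  rw [hB, show (j + 1 + (m + 1) : ℂ) = ↑(j + m + 1) + 1 by push_cast; ring,
    Complex.Gamma_nat_eq_factorial, Complex.Gamma_nat_eq_factorial,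
    Complex.Gamma_nat_eq_factorial] at h
  rw [eq_div_iff (by positivity), mul_comm]
  exact_mod_cast h.symm

theorem setIntegral_cornerSimplex_prod_cornerWeights_pow (n : ℕ) (k : Fin (n + 1) → ℕ) :
    ∫ t in cornerSimplex n 1, ∏ i, cornerWeights t i ^ k i =
      (∏ i, (k i)! : ℝ) / (∑ i, k i + n)! := by
  induction n with
  | zero =>
    have huniv : cornerSimplex 0 1 = Set.univ := by ext t; simp [cornerSimplex]
    simp [huniv, cornerWeights, Fin.snoc, measureReal_def, volume_pi, factorial_ne_zero]
  | succ n ih =>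
    rw [setIntegral_cornerSimplex_succ
      ((Continuous.continuousOn (by fun_prop)).integrableOn_compact (isCompact_cornerSimplex _ _))]
    have hslice : ∀ s ∈ Set.Ioo (0 : ℝ) 1,
        ∫ u in cornerSimplex n (1 - s), ∏ i, cornerWeights (Fin.cons s u) i ^ k i =
          (∏ i : Fin (n + 1), (k i.succ)! : ℝ) / (∑ i : Fin (n + 1), k i.succ + n)! *
            (s ^ k 0 * (1 - s) ^ (∑ i : Fin (n + 1), k i.succ + n)) := by
      intro s hs
      rw [setIntegral_cornerSimplex_eq_pow_mul (sub_pos.2 hs.2)]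
      simp_rw [cornerWeights_cons_smul, Fin.prod_univ_succ (n := n + 1), Fin.cons_zero,
        Fin.cons_succ, Pi.smul_apply, smul_eq_mul, mul_pow, prod_mul_distrib, prod_pow_eq_pow_sum]
      rw [integral_const_mul, integral_const_mul, ih]
      ring
    rw [setIntegral_congr_fun measurableSet_Ioo hslice, integral_const_mul,
      ← integral_Ioc_eq_integral_Ioo, ← intervalIntegral.integral_of_le zero_le_one,
      integral_pow_mul_one_sub_pow, Fin.prod_univ_succ (f := fun i => ((k i)! : ℝ)),
      Fin.sum_univ_succ (f := k), show ∀ a b : ℕ, a + (b + n) + 1 = a + b + (n + 1) by omega]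
    field_simp

theorem volume_real_cornerSimplex (n : ℕ) : volume.real (cornerSimplex n 1) = (n ! : ℝ)⁻¹ := by
  simpa using setIntegral_cornerSimplex_prod_cornerWeights_pow n 0

theorem setIntegral_cornerSimplex_sum_cornerWeights_mul_pow (n p : ℕ) (c : Fin (n + 1) → ℝ) :
    ∫ t in cornerSimplex n 1, (∑ i, cornerWeights t i * c i) ^ p =
      (p ! : ℝ) / (p + n)! * ∑ k ∈ Nat.antidiagonalTuple (n + 1) p, ∏ i, c i ^ k i := by
  simp_rw [sum_pow_eq_sum_piAntidiag, piAntidiag_univ_fin_eq_antidiagonalTuple, mul_pow,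
    prod_mul_distrib]
  rw [integral_finsetSum _ fun k _ =>
    (Continuous.continuousOn (by fun_prop)).integrableOn_compact (isCompact_cornerSimplex n 1),
    mul_sum]
  refine sum_congr rfl fun k hk => ?_
  rw [Nat.mem_antidiagonalTuple] at hk
  have hmult : (∏ i, ((k i)! : ℝ)) * multinomial univ k = p ! := by
    rw [← hk]
    exact_mod_cast Nat.multinomial_spec univ k
  rw [integral_const_mul, integral_mul_const, setIntegral_cornerSimplex_prod_cornerWeights_pow, hk,
    ← hmult]
  ring

theorem convexHull_range_eq_image_stdSimplex {R E ι : Type*} [Field R] [LinearOrder R]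
    [IsStrictOrderedRing R] [AddCommGroup E] [Module R E] [Fintype ι] (v : ι → E) :
    convexHull R (Set.range v) = Fintype.linearCombination R v '' stdSimplex R ι := by
  classical
  rw [← convexHull_rangle_single_eq_stdSimplex, LinearMap.image_convexHull, ← Set.range_comp]
  congr
  ext i
  simp

theorem cornerWeights_injective : Function.Injective (cornerWeights (n := n)) := fun s t h => by
  simpa [cornerWeights] using congrArg Fin.init h

theorem image_cornerWeights_cornerSimplex :
    cornerWeights '' cornerSimplex n 1 = stdSimplex ℝ (Fin (n + 1)) := by
  ext w
  constructor
  · rintro ⟨t, ⟨ht0, ht1⟩, rfl⟩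
    refine ⟨fun i => Fin.lastCases ?_ (fun j => ?_) i, ?_⟩ <;>
      simp [cornerWeights, Fin.sum_univ_castSucc, ht0, ht1]
  · intro hw
    have hsum : ∑ i, Fin.init w i + w (Fin.last n) = 1 := by
      simpa [Fin.sum_univ_castSucc, Fin.init] using hw.2
    refine ⟨Fin.init w, ⟨fun i => hw.1 _, by linarith [hw.1 (Fin.last n)]⟩, ?_⟩
    rw [cornerWeights, ← eq_sub_of_add_eq' hsum, Fin.snoc_init_self]

theorem sum_cornerWeights (t : Fin n → ℝ) : ∑ i, cornerWeights t i = 1 := by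
  simp [cornerWeights, Fin.sum_univ_castSucc]

variable {E : Type*} [AddCommGroup E] [Module ℝ E]

theorem sum_cornerWeights_smul (v : Fin (n + 1) → E) (t : Fin n → ℝ) :
    ∑ i, cornerWeights t i • v i =
      Fintype.linearCombination ℝ (fun i => v i.castSucc - v (Fin.last n)) t + v (Fin.last n) := by
  simp [cornerWeights, Fin.sum_univ_castSucc, Fintype.linearCombination_apply, smul_sub, sub_smul,
    sum_sub_distrib, ← sum_smul]
  abel

theorem convexHull_range_eq_image_cornerSimplex (v : Fin (n + 1) → E) :
    convexHull ℝ (Set.range v) = (fun t => ∑ i, cornerWeights t i • v i) '' cornerSimplex n 1 := by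
  rw [convexHull_range_eq_image_stdSimplex, ← image_cornerWeights_cornerSimplex, Set.image_image]
  rfl

theorem injective_sum_cornerWeights_smul {v : Fin (n + 1) → E} (hv : AffineIndependent ℝ v) :
    Function.Injective fun t => ∑ i, cornerWeights t i • v i := fun s t hst =>
  cornerWeights_injective <|
    (affineIndependent_iff_eq_of_fintype_affineCombination_eq ℝ v).1 hv _ _
      (sum_cornerWeights s) (sum_cornerWeights t) <| by
        rwa [affineCombination_eq_linear_combination _ _ _ (sum_cornerWeights s),
          affineCombination_eq_linear_combination _ _ _ (sum_cornerWeights t)]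

theorem setIntegral_convexHull_range_eq {n : ℕ} {v : Fin (n + 1) → Fin n → ℝ}
    (hv : AffineIndependent ℝ v) (g : (Fin n → ℝ) → ℝ) :
    ∫ x in convexHull ℝ (Set.range v), g x =
      |LinearMap.det (Fintype.linearCombination ℝ fun i => v i.castSucc - v (Fin.last n))| *
        ∫ t in cornerSimplex n 1, g (∑ i, cornerWeights t i • v i) := by
  set A := Fintype.linearCombination ℝ fun i : Fin n => v i.castSucc - v (Fin.last n)
  have hderiv : ∀ t, HasFDerivAt (fun t => ∑ i, cornerWeights t i • v i)
      (LinearMap.toContinuousLinearMap A) t := fun t => by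
    simp_rw [sum_cornerWeights_smul]
    exact (LinearMap.toContinuousLinearMap A).hasFDerivAt.add_const _
  rw [convexHull_range_eq_image_cornerSimplex, integral_image_eq_integral_abs_det_fderiv_smul
    volume (measurableSet_cornerSimplex n 1) (fun t _ => (hderiv t).hasFDerivWithinAt)
    (injective_sum_cornerWeights_smul hv).injOn]
  simp_rw [LinearMap.det_toContinuousLinearMap, smul_eq_mul, integral_const_mul]

theorem apply_sum_smul_of_affine {d : ℕ} {ι : Type*} [Fintype ι] {a : Fin d → ℝ} {b : ℝ}
    {f : (Fin d → ℝ) → ℝ} (hf : ∀ x, f x = ∑ j, a j * x j + b) {w : ι → ℝ} (hw : ∑ i, w i = 1)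
    (x : ι → Fin d → ℝ) : f (∑ i, w i • x i) = ∑ i, w i * f (x i) := by
  simp_rw [hf, mul_add, sum_add_distrib, ← sum_mul, hw, one_mul, Finset.sum_apply, Pi.smul_apply,
    smul_eq_mul, mul_sum]
  rw [sum_comm]
  exact congrArg (· + b) (sum_congr rfl fun _ _ => sum_congr rfl fun _ _ => by ring)

end

theorem integral_affine_pow_simplex_general (d : ℕ)
    (a : Fin d → ℝ) (b : ℝ) (f : (Fin d → ℝ) → ℝ)
    (hf : ∀ x, f x = (∑ i, a i * x i) + b)
    (v : Fin (d + 1) → (Fin d → ℝ)) (hv : AffineIndependent ℝ v)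
    (p : ℕ) :
    ∫ x in convexHull ℝ (Set.range v), (f x) ^ p =
      (volume (convexHull ℝ (Set.range v))).toReal * (((p + d).choose d : ℝ))⁻¹ *
        ∑ k ∈ Finset.Nat.antidiagonalTuple (d + 1) p, ∏ i, (f (v i)) ^ (k i) := by
  have hvol := setIntegral_convexHull_range_eq hv fun _ => 1
  simp only [setIntegral_const, volume_real_cornerSimplex, smul_eq_mul, mul_one] at hvol
  rw [← measureReal_def, hvol, setIntegral_convexHull_range_eq hv]
  simp_rw [apply_sum_smul_of_affine hf (sum_cornerWeights _)]
  rw [setIntegral_cornerSimplex_sum_cornerWeights_mul_pow]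
  have hchoose : ((p + d).choose d : ℝ) * p.factorial * d.factorial = (p + d).factorial := by
    exact_mod_cast Nat.add_choose_mul_factorial_mul_factorial p d
  rw [← hchoose]
  field_simp

/-- integral of the `p`-th power of an affine function over a `d`-simplex. -/
theorem integral_affine_pow_simplex (d : ℕ) (hd : 1 ≤ d)
    (a : Fin d → ℝ) (b : ℝ) (f : (Fin d → ℝ) → ℝ)
    (hf : ∀ x, f x = (∑ i, a i * x i) + b)
    (v : Fin (d + 1) → (Fin d → ℝ)) (hv : AffineIndependent ℝ v)
    (p : ℕ) :
    ∫ x in convexHull ℝ (Set.range v), (f x) ^ p =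
      (volume (convexHull ℝ (Set.range v))).toReal * (((p + d).choose d : ℝ))⁻¹ *
        ∑ k ∈ Finset.Nat.antidiagonalTuple (d + 1) p, ∏ i, (f (v i)) ^ (k i) :=
  integral_affine_pow_simplex_general d a b f hf v hv p
end

section
/- Let K ≥ 2 be an integer and h > 0. Let M ∈ ℝ^{K×K} be the matrix with entries M_{p,1} = 1 for all 1 ≤ p ≤ K, and for 2 ≤ q ≤ K, M_{p,q} = h·(p − q + 1) if p ≥ q and M_{p,q} = 0 if p < q. Then M is invertible and its ℓ₂ condition number satisfies ‖M‖₂ · ‖M^{-1}‖₂ ≥ √(K(K−1)(2K−1)/6), where ‖·‖₂ denotes the operator norm induced by the Euclidean norm. -/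
/-!
Column `1` of `M` is `h • (0, 1, …, K - 1)`, so `‖M‖ ≥ h √(∑ p²)`. Since `M` is lower triangular
with `M₁₁ = h`, the inverse has `(M⁻¹)₁₁ = h⁻¹`, and an operator norm dominates every entry, so
`‖M⁻¹‖ ≥ h⁻¹`.
-/

open Matrix WithLp

namespace Matrix

variable {𝕜 n : Type*} [RCLike 𝕜] [Fintype n] [DecidableEq n]

lemma norm_col_le_l2_opNorm (A : Matrix n n 𝕜) (j : n) :
    ‖toLp 2 (A.col j)‖ ≤ ‖toEuclideanCLM (𝕜 := 𝕜) A‖ := by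
  have h := (toEuclideanCLM (𝕜 := 𝕜) A).le_opNorm (toLp 2 (Pi.single j 1))
  rwa [toEuclideanCLM_toLp, mulVec_single_one, PiLp.toLp_single, PiLp.norm_single, norm_one,
    mul_one] at h

lemma norm_apply_le_l2_opNorm (A : Matrix n n 𝕜) (i j : n) :
    ‖A i j‖ ≤ ‖toEuclideanCLM (𝕜 := 𝕜) A‖ :=
  (PiLp.norm_apply_le (toLp 2 (A.col j)) i).trans (norm_col_le_l2_opNorm A j)

lemma IsLowerTriangular.inv_apply_self {K : Type*} [Field K] [LinearOrder n]
    {A : Matrix n n K} (hA : A.IsLowerTriangular) (hdet : IsUnit A.det) (i : n) :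
    A⁻¹ i i = (A i i)⁻¹ := by
  have : Invertible A := A.invertibleOfIsUnitDet hdet
  have hAinv : A⁻¹.IsLowerTriangular := blockTriangular_inv_of_blockTriangular hA
  have hdiag : A⁻¹ i i * A i i = 1 := by
    have h1 := congrFun (congrFun (A.nonsing_inv_mul hdet) i) i
    rw [mul_apply, Finset.sum_eq_single i, one_apply_eq] at h1
    · exact h1
    · intro k _ hki
      rcases hki.lt_or_gt with hlt | hgt
      · rw [hA (by simpa using hlt), mul_zero]
      · rw [hAinv (by simpa using hgt), zero_mul]
    · simp
  exact eq_inv_of_mul_eq_one_left hdiag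

end Matrix

lemma sum_range_natCast_sq (n : ℕ) :
    ∑ p ∈ Finset.range n, (p : ℝ) ^ 2 = n * (n - 1) * (2 * n - 1) / 6 := by
  induction n with
  | zero => simp
  | succ n ih =>
    rw [Finset.sum_range_succ, ih]
    push_cast
    ring

lemma EuclideanSpace.norm_toLp_val (K : ℕ) :
    ‖toLp 2 (fun p : Fin K => ((p : ℕ) : ℝ))‖ = √((K * (K - 1) * (2 * K - 1) : ℝ) / 6) := by
  rw [EuclideanSpace.norm_eq, ← sum_range_natCast_sq,
    ← Fin.sum_univ_eq_sum_range (fun p => (p : ℝ) ^ 2)]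
  simp

/-- Column `0` is the constant function `1`, column `q ≥ 1` the hinge `x ↦ max (x - x_{q-1}) 0`,
both sampled at the control points `x_p = p * h`. -/
def reluInterpolationMatrix (K : ℕ) (h : ℝ) : Matrix (Fin K) (Fin K) ℝ :=
  of fun p q =>
    if (q : ℕ) = 0 then 1
    else if (q : ℕ) ≤ (p : ℕ) then h * (((p : ℕ) - (q : ℕ) + 1 : ℕ) : ℝ) else 0

namespace reluInterpolationMatrix

variable (K : ℕ) (h : ℝ)

lemma isLowerTriangular : (reluInterpolationMatrix K h).IsLowerTriangular := by
  intro p q hpq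
  have hqp : p < q := hpq
  simp [reluInterpolationMatrix, not_le.mpr hqp, Nat.ne_zero_of_lt (Fin.lt_def.mp hqp)]

lemma apply_self (p : Fin K) :
    reluInterpolationMatrix K h p p = if (p : ℕ) = 0 then 1 else h := by
  by_cases hp : (p : ℕ) = 0 <;> simp [reluInterpolationMatrix, hp]

lemma isUnit_det (hh : h ≠ 0) : IsUnit (reluInterpolationMatrix K h).det := by
  rw [det_of_isLowerTriangular _ (isLowerTriangular K h), isUnit_iff_ne_zero,
    Finset.prod_ne_zero_iff]
  intro p _
  rw [apply_self]
  split_ifs <;> simp [hh]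

lemma col_one (hK : 1 < K) :
    (reluInterpolationMatrix K h).col ⟨1, hK⟩ = h • fun p : Fin K => ((p : ℕ) : ℝ) := by
  ext p
  simp only [col_apply, reluInterpolationMatrix, of_apply, one_ne_zero, if_false,
    Pi.smul_apply, smul_eq_mul]
  split_ifs with hp
  · rw [Nat.sub_add_cancel hp]
  · rw [Nat.eq_zero_of_not_pos hp, Nat.cast_zero, mul_zero]

end reluInterpolationMatrix

/-- the interpolation matrix of the nonlocal (ReLU-based) parametrization of
one-dimensional CPWL functions on `K` equispaced control points with step `h` is invertible
and its `ℓ₂` (spectral) condition number is at least `√(K(K−1)(2K−1)/6)`. -/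
theorem nonlocal_interpolation_condition_number (K : ℕ) (hK : 2 ≤ K) (h : ℝ) (hh : 0 < h)
    (M : Matrix (Fin K) (Fin K) ℝ)
    (hM : ∀ p q : Fin K, M p q =
      if (q : ℕ) = 0 then 1
      else if (q : ℕ) ≤ (p : ℕ) then h * (((p : ℕ) - (q : ℕ) + 1 : ℕ) : ℝ) else 0) :
    IsUnit M.det ∧
    ‖Matrix.toEuclideanCLM (𝕜 := ℝ) M‖ * ‖Matrix.toEuclideanCLM (𝕜 := ℝ) M⁻¹‖ ≥
      Real.sqrt ((K * (K - 1) * (2 * K - 1) : ℝ) / 6) := by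
  obtain rfl : M = reluInterpolationMatrix K h := ext hM
  have hdet := reluInterpolationMatrix.isUnit_det K h hh.ne'
  refine ⟨hdet, ?_⟩
  let i₁ : Fin K := ⟨1, hK⟩
  have hcol := norm_col_le_l2_opNorm (reluInterpolationMatrix K h) i₁
  rw [reluInterpolationMatrix.col_one, WithLp.toLp_smul, norm_smul,
    EuclideanSpace.norm_toLp_val, Real.norm_of_nonneg hh.le] at hcol
  have hentry := norm_apply_le_l2_opNorm (reluInterpolationMatrix K h)⁻¹ i₁ i₁
  rw [(reluInterpolationMatrix.isLowerTriangular K h).inv_apply_self hdet,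
    reluInterpolationMatrix.apply_self, if_neg one_ne_zero, norm_inv,
    Real.norm_of_nonneg hh.le] at hentry
  calc √((K * (K - 1) * (2 * K - 1) : ℝ) / 6)
      = h * √((K * (K - 1) * (2 * K - 1) : ℝ) / 6) * h⁻¹ := by field_simp
    _ ≤ _ := mul_le_mul hcol hentry (by positivity) (norm_nonneg _)
end

section
/- Let d ≥ 1 and let D : ℝ^d → ℝ be the Cartesian linear box spline. Then D(1, 1, …, 1) = 1 and D(k) = 0 for every k ∈ ℤ^d with k ≠ (1, 1, …, 1). -/
/-!
At an integer point the ramp is a layer sum, `max(0, m) = Σ_{n ≥ 0} [n < m]`, and since a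
minimum of finitely many integers is attained, `max(0, min_i m_i) = Σ_n Π_i [n < m_i]`. For each layer `n`
the alternating sum over `ε` factorises coordinatewise, each factor
`[n < k_i - t] - [n < k_i - t - 1]` being the Kronecker delta `[k_i = n + 1 + t]`, where
`t = ε_{d+1}`. Summing over `t` leaves `F(n) - F(n + 1)` with `F(n) = [k = (n + 1, …, n + 1)]`,
and the sum over `n` telescopes to `F(0) = [k = (1, …, 1)]`.
-/

/-- The Cartesian linear box spline on `ℝ^d`:
`D(x) = Σ_{ε ∈ {0,1}^{d+1}} (−1)^{|ε|} max(0, min_{1 ≤ i ≤ d} (x_i − ε_i − ε_{d+1}))`. -/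
noncomputable def boxSplineD (d : ℕ) (x : Fin d → ℝ) : ℝ :=
  ∑ ε : Fin (d + 1) → Fin 2,
    (-1 : ℝ) ^ (∑ i, (ε i : ℕ)) *
      max 0 (⨅ i : Fin d, (x i - ((ε (Fin.castSucc i) : ℕ) : ℝ) - ((ε (Fin.last d) : ℕ) : ℝ)))

open Finset

theorem max_zero_intCast_eq_sum_range {R : Type*} [Ring R] [LinearOrder R] [IsStrictOrderedRing R]
    (m : ℤ) {N : ℕ} (h : m ≤ N) :
    max 0 (m : R) = ∑ n ∈ range N, if (n : ℤ) < m then 1 else 0 := by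
  have hfilter : (range N).filter (fun n : ℕ => (n : ℤ) < m) = range m.toNat := by
    ext n; simp only [mem_filter, mem_range]; omega
  rw [sum_boole, hfilter, card_range, max_comm, ← Int.cast_natCast, Int.toNat_eq_max]
  push_cast; rfl

theorem max_zero_iInf_intCast_eq_sum_range {ι : Type*} [Fintype ι] [Nonempty ι] (m : ι → ℤ)
    {N : ℕ} {j : ι} (hj : m j ≤ N) :
    max 0 (⨅ i, (m i : ℝ)) = ∑ n ∈ range N, ∏ i, if (n : ℤ) < m i then 1 else 0 := by
  obtain ⟨i₀, hi₀⟩ := exists_eq_ciInf_of_finite (f := fun i => (m i : ℝ))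
  have hmin (i : ι) : m i₀ ≤ m i := by
    exact_mod_cast hi₀.trans_le (ciInf_le (Finite.bddBelow_range _) i)
  rw [← hi₀, max_zero_intCast_eq_sum_range _ ((hmin j).trans hj)]
  refine sum_congr rfl fun n _ => ?_
  rw [Fintype.prod_boole]
  exact if_congr ⟨fun h i => h.trans_le (hmin i), fun h => h i₀⟩ rfl rfl

theorem Fintype.sum_neg_one_pow_mul_prod {ι R : Type*} [Fintype ι] [DecidableEq ι] [CommRing R]
    (f : ι → Fin 2 → R) :
    ∑ ε : ι → Fin 2, (-1 : R) ^ (∑ i, (ε i : ℕ)) * ∏ i, f i (ε i) = ∏ i, (f i 0 - f i 1) :=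
  calc _ = ∑ ε : ι → Fin 2, ∏ i, ((-1 : R) ^ (ε i : ℕ) * f i (ε i)) := by
        simp_rw [← prod_pow_eq_pow_sum, ← prod_mul_distrib]
    _ = ∏ i, ∑ j : Fin 2, (-1 : R) ^ (j : ℕ) * f i j :=
        (Fintype.prod_sum fun i (j : Fin 2) => (-1 : R) ^ (j : ℕ) * f i j).symm
    _ = _ := by simp [Fin.sum_univ_two, sub_eq_add_neg]

theorem Fin.sum_univ_fun_snoc {M α : Type*} [AddCommMonoid M] [Fintype α] {d : ℕ}
    (g : (Fin (d + 1) → α) → M) :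
    ∑ ε, g ε = ∑ t : α, ∑ ε : Fin d → α, g (Fin.snoc ε t) := by
  rw [← (Fin.snocEquiv fun _ => α).sum_comp, Fintype.sum_prod_type]
  rfl

theorem ite_lt_sub_ite_lt_sub_one {R : Type*} [AddGroupWithOne R] (n a : ℤ) :
    ((if n < a then 1 else 0) - if n < a - 1 then 1 else 0 : R) = if a = n + 1 then 1 else 0 := by
  split_ifs <;> first | omega | simp

theorem sum_cube_neg_one_pow_mul_prod_ite_lt {R : Type*} [CommRing R] {d : ℕ} (k : Fin d → ℤ)
    (n : ℤ) :
    ∑ ε : Fin (d + 1) → Fin 2, (-1 : R) ^ (∑ i, (ε i : ℕ)) *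
        ∏ i, (if n < k i - (ε (Fin.castSucc i) : ℕ) - (ε (Fin.last d) : ℕ) then 1 else 0) =
      (∏ i, if k i = n + 1 then 1 else 0) - ∏ i, if k i = n + 1 + 1 then 1 else 0 := by
  have hslice (t : ℕ) : ∑ ε : Fin d → Fin 2, (-1 : R) ^ (∑ i, (ε i : ℕ)) *
      ∏ i, (if n < k i - (ε i : ℕ) - t then 1 else 0) = ∏ i, if k i = n + 1 + t then 1 else 0 := by
    rw [Fintype.sum_neg_one_pow_mul_prod
      fun i (j : Fin 2) => if n < k i - (j : ℕ) - t then (1 : R) else 0]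
    refine prod_congr rfl fun i _ => ?_
    convert ite_lt_sub_ite_lt_sub_one n (k i - t) using 2
      <;> first | omega | simp [sub_right_comm]
  rw [Fin.sum_univ_fun_snoc]
  simp only [Fin.sum_univ_castSucc (n := d), Fin.snoc_castSucc, Fin.snoc_last, pow_add]
  simp_rw [mul_right_comm _ ((-1 : R) ^ ((_ : Fin 2) : ℕ)), ← sum_mul, hslice, Fin.sum_univ_two]
  simp [sub_eq_add_neg]

theorem boxSplineD_intCast {d : ℕ} [NeZero d] (k : Fin d → ℤ) :
    boxSplineD d (fun i => (k i : ℝ)) = ∏ i, if k i = 1 then 1 else 0 := by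
  -- `N` bounds every `min_i (k_i - ε_i - ε_{d+1})` and makes `F N` vanish.
  set N := (k 0).toNat
  let F (n : ℕ) : ℝ := ∏ i, if k i = (n : ℤ) + 1 then 1 else 0
  have hlayer (ε : Fin (d + 1) → Fin 2) :
      max 0 (⨅ i, (k i : ℝ) - (ε (Fin.castSucc i) : ℕ) - (ε (Fin.last d) : ℕ)) =
        ∑ n ∈ range N, ∏ i,
          if (n : ℤ) < k i - (ε (Fin.castSucc i) : ℕ) - (ε (Fin.last d) : ℕ) then 1 else 0 := by
    exact_mod_cast max_zero_iInf_intCast_eq_sum_range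
      (fun i => k i - (ε (Fin.castSucc i) : ℕ) - (ε (Fin.last d) : ℕ)) (j := 0) (N := N) (by omega)
  have hFN : F N = 0 := prod_eq_zero (mem_univ 0) (if_neg (by omega))
  calc boxSplineD d (fun i => (k i : ℝ))
      = ∑ ε : Fin (d + 1) → Fin 2, (-1 : ℝ) ^ (∑ i, (ε i : ℕ)) * ∑ n ∈ range N, ∏ i,
          if (n : ℤ) < k i - (ε (Fin.castSucc i) : ℕ) - (ε (Fin.last d) : ℕ) then 1 else 0 :=
        sum_congr rfl fun ε _ => by rw [hlayer]
    _ = ∑ n ∈ range N, (F n - F (n + 1)) := by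
        simp_rw [mul_sum]
        rw [sum_comm]
        exact sum_congr rfl fun n _ => sum_cube_neg_one_pow_mul_prod_ite_lt k n
    _ = F 0 - F N := sum_range_sub' F N
    _ = ∏ i, if k i = 1 then 1 else 0 := by simp [F, hFN]

/-- the Cartesian linear box spline interpolates the Kronecker delta at the
lattice points, centered at the all-ones point: `D(1,…,1) = 1` and `D(k) = 0` for every other
`k ∈ ℤ^d`. -/
theorem boxSpline_lattice_values (d : ℕ) (hd : 1 ≤ d) :
    boxSplineD d (fun _ => (1 : ℝ)) = 1 ∧
    ∀ k : Fin d → ℤ, k ≠ (fun _ => 1) → boxSplineD d (fun i => (k i : ℝ)) = 0 := by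
  have : NeZero d := ⟨by omega⟩
  refine ⟨by simpa using boxSplineD_intCast fun _ => 1, fun k hk => ?_⟩
  obtain ⟨i, hi⟩ := Function.ne_iff.mp hk
  rw [boxSplineD_intCast, prod_eq_zero (mem_univ i) (if_neg hi)]
end

section
/- Let d ≥ 1 and let D : ℝ^d → ℝ be the Cartesian linear box spline. Then for every x ∈ ℝ^d, Σ_{k ∈ ℤ^d} D(x − k) = 1, where the sum has only finitely many nonzero terms. -/
open Finset

section AlternatingSum

variable {R : Type*} [CommRing R]

theorem sum_sum_neg_one_pow_mul_apply_add : ∀ {n : ℕ} (F : (Fin n → ℕ) → R),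
    ∑ κ : Fin n → Fin 2, ∑ ε : Fin n → Fin 2,
        (-1 : R) ^ (∑ i, (ε i : ℕ)) * F (fun i => κ i + ε i)
      = ∑ η : Fin n → Fin 2, (-1 : R) ^ (∑ i, (η i : ℕ)) * F (fun i => 2 * η i)
  | 0, F => by simpa using congrArg F (funext fun i => i.elim0)
  | n + 1, F => by
    have sum_cons (G : (Fin (n + 1) → Fin 2) → R) :
        ∑ ε, G ε = ∑ b : Fin 2, ∑ ε : Fin n → Fin 2, G (Fin.cons b ε) := by
      rw [← (Fin.consEquiv fun _ => Fin 2).sum_comp, Fintype.sum_prod_type]; rfl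
    have sum_val_cons (b : Fin 2) (ε : Fin n → Fin 2) :
        ∑ i, ((Fin.cons b ε : Fin (n + 1) → Fin 2) i : ℕ) = b + ∑ i, (ε i : ℕ) :=
      Fin.sum_univ_succ _
    have add_cons (a b : Fin 2) (κ ε : Fin n → Fin 2) :
        (fun i => ((Fin.cons a κ : Fin (n + 1) → Fin 2) i : ℕ)
            + ((Fin.cons b ε : Fin (n + 1) → Fin 2) i : ℕ))
          = Fin.cons (a + b : ℕ) (fun i => (κ i : ℕ) + ε i) := by
      funext i; cases i using Fin.cases <;> simp
    have two_mul_cons (b : Fin 2) (η : Fin n → Fin 2) :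
        (fun i => 2 * ((Fin.cons b η : Fin (n + 1) → Fin 2) i : ℕ))
          = Fin.cons (2 * b : ℕ) (fun i => 2 * (η i : ℕ)) := by
      funext i; cases i using Fin.cases <;> simp
    simp only [sum_cons, sum_val_cons, add_cons, two_mul_cons, pow_add, mul_assoc, ← mul_sum]
    conv_lhs => enter [2, a]; rw [sum_comm]
    simp only [← mul_sum, fun c : ℕ => sum_sum_neg_one_pow_mul_apply_add fun σ => F (Fin.cons c σ)]
    norm_num [Fin.sum_univ_two]

theorem neg_one_pow_sum_add_single {ι : Type*} [Fintype ι] [DecidableEq ι]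
    (ε : ι → Fin 2) (i : ι) :
    (-1 : R) ^ (∑ j, ((ε + Pi.single i 1 : ι → Fin 2) j : ℕ)) = -(-1) ^ (∑ j, (ε j : ℕ)) := by
  have flip (a : Fin 2) : (-1 : R) ^ ((a + 1 : Fin 2) : ℕ) = -(-1) ^ (a : ℕ) := by
    fin_cases a <;> simp
  rw [← add_sum_erase _ _ (mem_univ i), ← add_sum_erase _ (fun j => (ε j : ℕ)) (mem_univ i),
    sum_congr rfl fun j hj => by
      rw [Pi.add_apply, Pi.single_eq_of_ne (ne_of_mem_erase hj), add_zero],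
    pow_add, pow_add, Pi.add_apply, Pi.single_eq_same, flip, neg_mul]

theorem sum_neg_one_pow_mul_eq_zero_of_add_single {ι : Type*} [Fintype ι] [DecidableEq ι]
    {F : (ι → Fin 2) → R} (i : ι) (hF : ∀ ε, F (ε + Pi.single i 1) = F ε) :
    ∑ ε : ι → Fin 2, (-1 : R) ^ (∑ j, (ε j : ℕ)) * F ε = 0 := by
  refine sum_involution (fun ε _ => ε + Pi.single i 1) (fun ε _ => ?_) (fun ε _ _ => ?_)
    (fun _ _ => mem_univ _) (fun ε _ => ?_)
  · rw [neg_one_pow_sum_add_single, hF, neg_mul, add_neg_cancel]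
  · simp
  · rw [add_assoc, ← Pi.single_add]; simp

end AlternatingSum

def unitClamp (t : ℝ) : ℝ := max 0 (min 1 t)

theorem monotone_unitClamp : Monotone unitClamp := fun _ _ h =>
  max_le_max le_rfl (min_le_min le_rfl h)

theorem continuous_unitClamp : Continuous unitClamp := by unfold unitClamp; fun_prop

theorem unitClamp_of_nonpos {t : ℝ} (h : t ≤ 0) : unitClamp t = 0 := by
  simp [unitClamp, h]

theorem unitClamp_of_one_le {t : ℝ} (h : 1 ≤ t) : unitClamp t = 1 := by
  simp [unitClamp, h]

theorem max_zero_sub_max_zero_sub_one (t : ℝ) : max 0 t - max 0 (t - 1) = unitClamp t := by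
  simp only [unitClamp, max_def, min_def]
  split_ifs <;> linarith

theorem unitClamp_iInf {ι : Type*} [Finite ι] [Nonempty ι] (z : ι → ℝ) :
    unitClamp (⨅ i, z i) = ⨅ i, unitClamp (z i) :=
  monotone_unitClamp.map_ciInf_of_continuousAt continuous_unitClamp.continuousAt
    (Set.finite_range z).bddBelow

theorem ciInf_sub_const {ι : Type*} [Finite ι] [Nonempty ι] (z : ι → ℝ) (c : ℝ) :
    ⨅ i, (z i - c) = (⨅ i, z i) - c :=
  (Monotone.map_ciInf_of_continuousAt (f := fun t : ℝ => t - c)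
    (continuous_sub_right c).continuousAt (fun _ _ h => sub_le_sub_right h c)
    (Set.finite_range z).bddBelow).symm

theorem unitClamp_iInf_eq_zero {ι : Type*} [Finite ι] {z : ι → ℝ} (i : ι) (h : z i ≤ 0) :
    unitClamp (⨅ j, z j) = 0 :=
  unitClamp_of_nonpos ((ciInf_le (Set.finite_range z).bddBelow i).trans h)

theorem unitClamp_iInf_eq_one {ι : Type*} [Nonempty ι] {z : ι → ℝ} (h : ∀ i, 1 ≤ z i) :
    unitClamp (⨅ i, z i) = 1 :=
  unitClamp_of_one_le (le_ciInf h)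

section BoxSpline

variable {d : ℕ} [NeZero d]

theorem boxSplineD_eq_sum_unitClamp (y : Fin d → ℝ) :
    boxSplineD d y = ∑ ε : Fin d → Fin 2,
      (-1 : ℝ) ^ (∑ i, (ε i : ℕ)) * unitClamp (⨅ i, (y i - ε i)) := by
  rw [boxSplineD, ← (Fin.snocEquiv fun _ => Fin 2).sum_comp, Fintype.sum_prod_type_right]
  refine sum_congr rfl fun ε _ => ?_
  rw [Fin.sum_univ_two]
  simp only [Fin.snocEquiv_apply, Fin.sum_univ_castSucc, Fin.snoc_castSucc, Fin.snoc_last,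
    Fin.val_zero, Fin.val_one, Nat.cast_zero, Nat.cast_one, sub_zero, add_zero, pow_add, pow_one]
  rw [ciInf_sub_const, ← max_zero_sub_max_zero_sub_one]
  ring

theorem boxSplineD_eq_zero_of_nonpos {y : Fin d → ℝ} (i : Fin d) (h : y i ≤ 0) :
    boxSplineD d y = 0 := by
  rw [boxSplineD_eq_sum_unitClamp]
  refine sum_eq_zero fun ε _ => ?_
  have : (0 : ℝ) ≤ (ε i : ℕ) := Nat.cast_nonneg _
  rw [unitClamp_iInf_eq_zero i (by linarith), mul_zero]

theorem boxSplineD_eq_zero_of_two_le {y : Fin d → ℝ} (i : Fin d) (h : 2 ≤ y i) :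
    boxSplineD d y = 0 := by
  rw [boxSplineD_eq_sum_unitClamp]
  refine sum_neg_one_pow_mul_eq_zero_of_add_single i fun ε => ?_
  simp only [unitClamp_iInf]
  congr 1
  funext j
  by_cases hj : j = i
  · subst hj
    have h₁ : ((ε j : ℕ) : ℝ) ≤ 1 := by exact_mod_cast Fin.is_le (ε j)
    have h₂ : (((ε + Pi.single j 1 : Fin d → Fin 2) j : ℕ) : ℝ) ≤ 1 := by exact_mod_cast Fin.is_le _
    rw [unitClamp_of_one_le (by linarith), unitClamp_of_one_le (by linarith)]
  · simp [Pi.single_eq_of_ne hj]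

theorem support_boxSplineD_sub_subset (x : Fin d → ℝ) :
    Function.support (fun k : Fin d → ℤ => boxSplineD d (fun i => x i - k i)) ⊆
      image (fun (κ : Fin d → Fin 2) i => ⌊x i⌋ - 1 + (κ i : ℤ)) univ := by
  intro k hk
  have lt : ∀ i, (k i : ℝ) < x i := fun i => by
    by_contra! h
    exact hk (boxSplineD_eq_zero_of_nonpos i (by simpa using h))
  have gt : ∀ i, x i - 2 < k i := fun i => by
    by_contra! h
    exact hk (boxSplineD_eq_zero_of_two_le i (by linarith))
  have le_floor (i : Fin d) : k i ≤ ⌊x i⌋ := Int.le_floor.mpr (lt i).le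
  have floor_le (i : Fin d) : ⌊x i⌋ - 1 ≤ k i := by
    have := Int.floor_lt.mpr (show x i < ((k i + 2 : ℤ) : ℝ) by push_cast; linarith [gt i])
    omega
  refine mem_image.mpr ⟨fun i => ⟨(k i - (⌊x i⌋ - 1)).toNat, by have := le_floor i; omega⟩,
    mem_univ _, funext fun i => ?_⟩
  have := floor_le i
  simp only
  omega

theorem sum_boxSplineD_sub_cube (z : Fin d → ℝ) (hz : ∀ i, 1 ≤ z i ∧ z i ≤ 2) :
    ∑ κ : Fin d → Fin 2, boxSplineD d (fun i => z i - κ i) = 1 := by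
  simp only [boxSplineD_eq_sum_unitClamp, sub_sub, ← Nat.cast_add]
  rw [sum_sum_neg_one_pow_mul_apply_add fun σ => unitClamp (⨅ i, z i - σ i),
    Fintype.sum_eq_single 0 fun η hη => ?_]
  · simpa using unitClamp_iInf_eq_one fun i => (hz i).1
  obtain ⟨i, hi⟩ := Function.ne_iff.mp hη
  have : z i - 2 * ((η i : ℕ) : ℝ) ≤ 0 := by
    norm_num [Fin.eq_one_of_ne_zero _ hi]; linarith [(hz i).2]
  rw [unitClamp_iInf_eq_zero i (by simpa using this), mul_zero]

end BoxSpline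

/-- the integer shifts of the Cartesian linear box spline form a partition of
unity: for every `x ∈ ℝ^d`, `Σ_{k ∈ ℤ^d} D(x − k) = 1`, the sum having finitely many nonzero
terms. -/
theorem boxSpline_partition_of_unity (d : ℕ) (hd : 1 ≤ d) (x : Fin d → ℝ) :
    {k : Fin d → ℤ | boxSplineD d (fun i => x i - (k i : ℝ)) ≠ 0}.Finite ∧
    ∑ᶠ k : Fin d → ℤ, boxSplineD d (fun i => x i - (k i : ℝ)) = 1 := by
  have : NeZero d := ⟨by omega⟩
  have hsupp := support_boxSplineD_sub_subset x
  refine ⟨(image _ univ).finite_toSet.subset hsupp, ?_⟩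
  rw [finsum_eq_sum_of_support_subset _ hsupp,
    sum_image fun κ _ κ' _ h => funext fun i => Fin.ext (by simpa using congrFun h i)]
  have shift (κ : Fin d → Fin 2) : (fun i => x i - ((⌊x i⌋ - 1 + (κ i : ℤ) : ℤ) : ℝ))
      = fun i => (x i - ⌊x i⌋ + 1) - (κ i : ℕ) := by
    funext i; push_cast; ring
  simp only [shift]
  exact sum_boxSplineD_sub_cube _ fun i =>
    ⟨by linarith [Int.floor_le (x i)], by linarith [Int.lt_floor_add_one (x i)]⟩
end

section
/- Let d ≥ 1, let D : ℝ^d → ℝ be the Cartesian linear box spline, and let a ∈ ℝ^d and b ∈ ℝ, and write 1 = (1,…,1). Then Σ_{k ∈ ℤ^d} (aᵀk + b) D(x + 1 − k) = aᵀx + b for all x ∈ ℝ^d, where the sum has only finitely many nonzero terms. -/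
open Finset


/-- clamp to `[0,1]` -/
noncomputable def clampBS (v : ℝ) : ℝ := max 0 (min 1 v)

lemma clampBS_min (x y : ℝ) : clampBS (min x y) = min (clampBS x) (clampBS y) := by
  unfold clampBS
  rcases le_total x y with h | h <;> simp [min_def, max_def] <;> split_ifs <;> linarith

lemma clampBS_nonneg (v : ℝ) : 0 ≤ clampBS v := le_max_left _ _

lemma clampBS_le_one (v : ℝ) : clampBS v ≤ 1 := by
  unfold clampBS
  rcases le_total 1 v with h | h <;> simp [min_def, max_def] <;> split_ifs <;> linarith

lemma clampBS_mono : Monotone clampBS := by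
  intro x y h
  unfold clampBS
  exact max_le_max le_rfl (min_le_min le_rfl h)

lemma max_sub_max_sub_one (v : ℝ) : max 0 v - max 0 (v - 1) = clampBS v := by
  unfold clampBS
  rcases le_total v 0 with h | h <;> rcases le_total v 1 with h' | h' <;>
    simp [max_def, min_def] <;> split_ifs <;> linarith

lemma min_sub_min (pa qa w : ℝ) (h : pa ≤ qa) :
    min qa w - min pa w = max pa (min qa w) - pa := by
  rcases le_total w pa with h1 | h1 <;> rcases le_total w qa with h2 | h2 <;>
    simp [max_def, min_def] <;> split_ifs <;> linarith

lemma clamp_sub_clamp (pa qa P Q : ℝ) (h : pa ≤ qa) :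
    max 0 (max pa (min qa Q) - max pa (min qa P)) = max 0 (min qa Q - max pa P) := by
  rcases le_total Q pa with h1 | h1 <;> rcases le_total Q qa with h2 | h2 <;>
    rcases le_total P pa with h3 | h3 <;> rcases le_total P qa with h4 | h4 <;>
    simp [max_def, min_def] <;> split_ifs <;> linarith

lemma sum_powerset_neg_one_pow_card_real {ι : Type*} {s : Finset ι} (hs : s.Nonempty) :
    ∑ A ∈ s.powerset, (-1 : ℝ) ^ A.card = 0 := by
  have h := Finset.sum_powerset_neg_one_pow_card_of_nonempty hs
  have : ((∑ A ∈ s.powerset, (-1 : ℤ) ^ A.card : ℤ) : ℝ) = ∑ A ∈ s.powerset, (-1 : ℝ) ^ A.card := by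
    push_cast
    rfl
  rw [← this, h, Int.cast_zero]

theorem lemA {ι : Type*} [DecidableEq ι] (p q : ι → ℝ) (s : Finset ι) (hs : s.Nonempty)
    (hpq : ∀ i ∈ s, p i ≤ q i) :
    ∑ A ∈ s.powerset, (-1 : ℝ) ^ A.card *
        s.inf' hs (fun i => if i ∈ A then p i else q i)
      = max 0 (s.inf' hs q - s.sup' hs p) := by
  induction hs using Finset.Nonempty.cons_induction generalizing p q with
  | singleton a =>
    rw [show ({a} : Finset ι).powerset = {∅, {a}} by rfl]
    rw [Finset.sum_pair (Ne.symm (Finset.singleton_ne_empty a))]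
    simp only [Finset.card_empty, Finset.card_singleton, Finset.inf'_singleton,
      Finset.sup'_singleton, pow_zero, pow_one]
    simp only [Finset.notMem_empty, if_false, Finset.mem_singleton, if_pos rfl, if_true]
    have := hpq a (by simp)
    rw [max_eq_right (by linarith)]
    ring
  | cons a s ha hs ih =>
    have hpqa : p a ≤ q a := hpq a (by simp)
    have hpq' : ∀ i ∈ s, p i ≤ q i := fun i hi => hpq i (by simp [hi])
    simp only [Finset.cons_eq_insert]
    rw [Finset.sum_powerset_insert ha]
    have h1 : ∀ A ∈ s.powerset, (-1 : ℝ) ^ A.card *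
        (insert a s).inf' (Finset.insert_nonempty a s) (fun i => if i ∈ A then p i else q i)
        = (-1 : ℝ) ^ A.card * min (q a) (s.inf' hs (fun i => if i ∈ A then p i else q i)) := by
      intro A hA
      rw [Finset.inf'_insert hs, if_neg (fun h => ha (Finset.mem_powerset.1 hA h)), (show ∀ x y : ℝ, x ⊓ y = min x y from fun _ _ => rfl)]
    have h2 : ∀ A ∈ s.powerset, (-1 : ℝ) ^ (insert a A).card *
        (insert a s).inf' (Finset.insert_nonempty a s)
          (fun i => if i ∈ insert a A then p i else q i)
        = -((-1 : ℝ) ^ A.card * min (p a) (s.inf' hs (fun i => if i ∈ A then p i else q i))) := by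
      intro A hA
      have haA : a ∉ A := fun h => ha (Finset.mem_powerset.1 hA h)
      have e : (s.inf' hs fun i => if i ∈ insert a A then p i else q i)
          = s.inf' hs (fun i => if i ∈ A then p i else q i) :=
        Finset.inf'_congr hs rfl (fun i hi => by
          have hia : i ≠ a := fun h => ha (h ▸ hi)
          simp [Finset.mem_insert, hia])
      rw [Finset.card_insert_of_notMem haA, Finset.inf'_insert hs,
        if_pos (Finset.mem_insert_self a A), e, (show ∀ x y : ℝ, x ⊓ y = min x y from fun _ _ => rfl), pow_succ]
      ring
    rw [Finset.sum_congr rfl h1, Finset.sum_congr rfl h2, Finset.sum_neg_distrib,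
      ← sub_eq_add_neg, ← Finset.sum_sub_distrib]
    have h3 : ∀ A ∈ s.powerset, (-1 : ℝ) ^ A.card *
          min (q a) (s.inf' hs (fun i => if i ∈ A then p i else q i))
        - (-1 : ℝ) ^ A.card *
          min (p a) (s.inf' hs (fun i => if i ∈ A then p i else q i))
        = (-1 : ℝ) ^ A.card *
          s.inf' hs (fun i => if i ∈ A then (fun j => max (p a) (min (q a) (p j))) i
            else (fun j => max (p a) (min (q a) (q j))) i)
        - (-1 : ℝ) ^ A.card * p a := by
      intro A hA
      have hg : ∀ x y : ℝ, max (p a) (min (q a) (min x y))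
          = min (max (p a) (min (q a) x)) (max (p a) (min (q a) y)) := by
        intro x y
        rw [inf_inf_distrib_left, sup_inf_left]
      have := Finset.apply_inf'_eq_inf'_comp (γ := ℝ) hs
        (f := fun i => if i ∈ A then p i else q i) (fun v => max (p a) (min (q a) v)) hg
      simp only [Function.comp] at this
      rw [← mul_sub, min_sub_min _ _ _ hpqa, mul_sub, this]
      congr 2
      apply Finset.inf'_congr hs rfl
      intro i _
      by_cases hiA : i ∈ A <;> simp [hiA]
    rw [Finset.sum_congr rfl h3, Finset.sum_sub_distrib, ← Finset.sum_mul,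
      sum_powerset_neg_one_pow_card_real hs, zero_mul, sub_zero]
    rw [ih _ _ (fun i hi => max_le_max le_rfl (min_le_min le_rfl (hpq' i hi)))]
    have hq' := Finset.apply_inf'_eq_inf'_comp (γ := ℝ) hs (f := q)
      (fun v => max (p a) (min (q a) v)) (fun x y => by
        show p a ⊔ q a ⊓ (x ⊓ y) = (p a ⊔ q a ⊓ x) ⊓ (p a ⊔ q a ⊓ y)
        rw [inf_inf_distrib_left, sup_inf_left])
    have hp' := Finset.apply_sup'_eq_sup'_comp (γ := ℝ) hs (f := p)
      (fun v => max (p a) (min (q a) v)) (fun x y => by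
        show p a ⊔ q a ⊓ (x ⊔ y) = (p a ⊔ q a ⊓ x) ⊔ (p a ⊔ q a ⊓ y)
        rw [inf_sup_left, sup_sup_distrib_left])
    simp only [Function.comp] at hq' hp'
    rw [← hq', ← hp', Finset.inf'_insert hs, Finset.sup'_insert hs]
    exact clamp_sub_clamp (p a) (q a) (s.sup' hs p) (s.inf' hs q) hpqa

noncomputable def mAux {ι : Type*} [DecidableEq ι] (t : ι → ℝ) (s A : Finset ι) : ℝ :=
  (if h : A.Nonempty then A.inf' h t else 1) -
    (if h : (s \ A).Nonempty then (s \ A).sup' h t else 0)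

theorem lemB {ι : Type*} [DecidableEq ι] (t u : ι → ℝ) (s : Finset ι) :
    ∀ u₀ : ℝ, (∀ i ∈ s, 0 ≤ t i ∧ t i < 1) →
    ∑ A ∈ s.powerset, (u₀ + ∑ i ∈ A, u i) * max 0 (mAux t s A)
      = u₀ + ∑ i ∈ s, u i * t i := by
  induction s using Finset.strongInduction with
  | _ s ih =>
    intro u₀ ht
    rcases s.eq_empty_or_nonempty with rfl | hs
    · simp [mAux]
    obtain ⟨i, his, hmax⟩ := s.exists_max_image t hs
    have h0i : 0 ≤ t i := (ht i his).1
    have h1i : t i < 1 := (ht i his).2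
    set s' := s.erase i with hs'def
    have his' : i ∉ s' := Finset.notMem_erase i s
    have hs_eq : s = insert i s' := (Finset.insert_erase his).symm
    have hsub' : s' ⊆ s := Finset.erase_subset i s
    have hmax' : ∀ j ∈ s', t j ≤ t i := fun j hj => hmax j (hsub' hj)
    have ht' : ∀ j ∈ s', 0 ≤ t j ∧ t j < 1 := fun j hj => ht j (hsub' hj)
    -- the sup over s is t i ; define S'
    have hsupS : ∀ h : s.Nonempty, s.sup' h t = t i :=
      fun h => le_antisymm (Finset.sup'_le _ _ hmax) (Finset.le_sup' t his)
    have hS'le : (if h : s'.Nonempty then s'.sup' h t else 0) ≤ t i := by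
      split_ifs with h
      · exact Finset.sup'_le _ _ hmax'
      · exact h0i
    conv_lhs => rw [hs_eq]
    rw [Finset.sum_powerset_insert his']
    -- first sum
    have hfirst : ∑ A ∈ s'.powerset, (u₀ + ∑ j ∈ A, u j) * max 0 (mAux t (insert i s') A)
        = u₀ * (1 - t i) := by
      rw [Finset.sum_eq_single_of_mem ∅ (Finset.empty_mem_powerset s')]
      · have hne : (insert i s' \ ∅).Nonempty := by
          rw [Finset.sdiff_empty]; exact Finset.insert_nonempty i s'
        rw [mAux, dif_neg (by simp), dif_pos hne]
        have : (insert i s' \ ∅).sup' hne t = t i :=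
          le_antisymm (Finset.sup'_le _ _ (fun j hj => hmax j (by rw [hs_eq]; simpa using hj)))
            (Finset.le_sup' t (by simp))
        rw [this, Finset.sum_empty, add_zero, max_eq_right (by linarith)]
      · intro A hA hAne
        have hAnon : A.Nonempty := Finset.nonempty_iff_ne_empty.2 hAne
        obtain ⟨j, hj⟩ := id hAnon
        have hAs' : A ⊆ s' := Finset.mem_powerset.1 hA
        have hiA : i ∉ A := fun h => his' (hAs' h)
        have hidiff : i ∈ insert i s' \ A :=
          Finset.mem_sdiff.2 ⟨Finset.mem_insert_self i s', hiA⟩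
        have hdne : (insert i s' \ A).Nonempty := ⟨i, hidiff⟩
        rw [mAux, dif_pos hAnon, dif_pos hdne]
        have hle : A.inf' hAnon t ≤ (insert i s' \ A).sup' hdne t :=
          le_trans (le_trans (Finset.inf'_le t hj) (hmax' j (hAs' hj)))
            (Finset.le_sup' t hidiff)
        rw [max_eq_left (by linarith), mul_zero]
    rw [hfirst]
    -- second sum
    have hsecond : ∀ A ∈ s'.powerset,
        (u₀ + ∑ j ∈ insert i A, u j) * max 0 (mAux t (insert i s') (insert i A))
        = ((u₀ + u i) + ∑ j ∈ A, u j) * max 0 (mAux t s' A)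
          + (if A = ∅ then (u₀ + u i) * (t i - 1) else 0) := by
      intro A hA
      have hAs' : A ⊆ s' := Finset.mem_powerset.1 hA
      have hiA : i ∉ A := fun h => his' (hAs' h)
      have hsum : ∑ j ∈ insert i A, u j = u i + ∑ j ∈ A, u j := Finset.sum_insert hiA
      have hdiff : insert i s' \ insert i A = s' \ A := by
        ext j
        simp only [Finset.mem_sdiff, Finset.mem_insert]
        constructor
        · rintro ⟨hj1 | hj1, hj2⟩
          · exact absurd (Or.inl hj1) hj2
          · exact ⟨hj1, fun h => hj2 (Or.inr h)⟩
        · rintro ⟨hj1, hj2⟩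
          refine ⟨Or.inr hj1, ?_⟩
          rintro (rfl | h)
          · exact his' hj1
          · exact hj2 h
      rcases A.eq_empty_or_nonempty with rfl | hAnon
      · have h1 : (insert i (∅ : Finset ι)).Nonempty := Finset.insert_nonempty _ _
        have : mAux t (insert i s') (insert i ∅) =
            t i - (if h : (s' \ ∅).Nonempty then (s' \ ∅).sup' h t else 0) := by
          rw [mAux, dif_pos h1, hdiff]
          congr 1
        rw [this]
        have hS0 : mAux t s' ∅ = 1 - (if h : (s' \ ∅).Nonempty then (s' \ ∅).sup' h t else 0) := by
          rw [mAux, dif_neg (by simp)]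
        rw [hS0]
        have hrw : (if h : (s' \ ∅).Nonempty then (s' \ ∅).sup' h t else 0)
            = (if h : s'.Nonempty then s'.sup' h t else 0) := by
          simp [Finset.sdiff_empty]
        rw [hrw]
        set S' := if h : s'.Nonempty then s'.sup' h t else 0 with hS'
        have hS'0 : 0 ≤ S' := by
          rw [hS']
          split_ifs with h
          · obtain ⟨j, hj⟩ := h
            exact le_trans (ht' j hj).1 (Finset.le_sup' t hj)
          · exact le_refl 0
        rw [max_eq_right (by linarith [hS'le]), max_eq_right (by linarith [hS'le])]
        simp only [if_pos rfl, if_true, Finset.sum_empty, hsum]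
        ring
      · obtain ⟨j, hj⟩ := id hAnon
        have hiAnon : (insert i A).Nonempty := Finset.insert_nonempty _ _
        have hinf : (insert i A).inf' hiAnon t = A.inf' hAnon t := by
          rw [Finset.inf'_insert hAnon, inf_eq_right]
          exact le_trans (Finset.inf'_le t hj) (hmax' j (hAs' hj))
        have heq : mAux t (insert i s') (insert i A) = mAux t s' A := by
          rw [mAux, mAux, dif_pos hiAnon, dif_pos hAnon, hinf, hdiff]
        rw [heq, hsum, if_neg (Finset.nonempty_iff_ne_empty.1 hAnon)]
        ring_nf
    rw [Finset.sum_congr rfl hsecond, Finset.sum_add_distrib]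
    rw [ih s' (by rw [hs_eq]; exact Finset.ssubset_insert his') (u₀ + u i) ht']
    rw [Finset.sum_ite_eq' s'.powerset ∅ (fun _ => (u₀ + u i) * (t i - 1))]
    rw [if_pos (Finset.empty_mem_powerset s')]
    have hRHS : ∑ j ∈ s, u j * t j = u i * t i + ∑ j ∈ s', u j * t j := by
      rw [hs_eq, Finset.sum_insert his']
    rw [hRHS]
    ring

lemma clampBS_max (x y : ℝ) : clampBS (max x y) = max (clampBS x) (clampBS y) := by
  unfold clampBS
  rcases le_total x y with h | h <;> simp [min_def, max_def] <;> split_ifs <;> linarith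

lemma sub_const_min (c x y : ℝ) : min x y - c = min (x - c) (y - c) := by
  rcases le_total x y with h | h <;> simp [min_def] <;> split_ifs <;> linarith

lemma sub_const_max (c x y : ℝ) : max x y - c = max (x - c) (y - c) := by
  rcases le_total x y with h | h <;> simp [max_def] <;> split_ifs <;> linarith

section ClosedForm

variable {d : ℕ}

lemma fin2_indicator_bij (d : ℕ) :
    Function.Bijective (fun (A : Finset (Fin d)) => (fun i => if i ∈ A then (1 : Fin 2) else 0)) := by
  constructor
  · intro A B hAB
    ext i
    have h2 := congrFun hAB i
    by_cases hA : i ∈ A <;> by_cases hB : i ∈ B <;>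
      simp only [hA, hB, if_true, if_false] at h2 <;> simp [hA, hB] <;>
      exact absurd h2 (by decide)
  · intro ε
    refine ⟨Finset.univ.filter (fun i => ε i = 1), ?_⟩
    funext i
    by_cases h : ε i = 1
    · simp [h]
    · have h0 : ε i = 0 := by
        have : ∀ a : Fin 2, a ≠ 1 → a = 0 := by decide
        exact this _ h
      simp [h, h0]

theorem boxSplineD_closed (hd : 1 ≤ d) (y : Fin d → ℝ) :
    boxSplineD d y = max 0 (clampBS ((Finset.univ : Finset (Fin d)).inf' ⟨⟨0, hd⟩, Finset.mem_univ _⟩ y)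
      - clampBS ((Finset.univ : Finset (Fin d)).sup' ⟨⟨0, hd⟩, Finset.mem_univ _⟩ y - 1)) := by
  have H : (Finset.univ : Finset (Fin d)).Nonempty := ⟨⟨0, hd⟩, Finset.mem_univ _⟩
  have hNE : Nonempty (Fin d) := ⟨⟨0, hd⟩⟩
  unfold boxSplineD
  -- step 1 : split the last coordinate using snoc
  rw [← Equiv.sum_comp (Fin.snocEquiv (fun _ => Fin 2)) (M := ℝ)]
  rw [Fintype.sum_prod_type]
  -- simplify snoc applications
  have hsnoc : ∀ (δ : Fin 2) (ε₀ : Fin d → Fin 2),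
      (∑ i : Fin (d+1), ((Fin.snocEquiv (fun _ => Fin 2) (δ, ε₀)) i : ℕ))
        = (∑ i : Fin d, (ε₀ i : ℕ)) + (δ : ℕ) := by
    intro δ ε₀
    rw [Fin.sum_univ_castSucc]
    simp [Fin.snocEquiv, Fin.snoc_castSucc, Fin.snoc_last]
  have key : ∀ (δ : Fin 2) (ε₀ : Fin d → Fin 2),
      (-1 : ℝ) ^ (∑ i, ((Fin.snocEquiv (fun _ => Fin 2) (δ, ε₀)) i : ℕ)) *
        max 0 (⨅ i : Fin d, (y i - (((Fin.snocEquiv (fun _ => Fin 2) (δ, ε₀)) (Fin.castSucc i) : ℕ) : ℝ)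
          - (((Fin.snocEquiv (fun _ => Fin 2) (δ, ε₀)) (Fin.last d) : ℕ) : ℝ)))
      = (-1 : ℝ) ^ ((∑ i, (ε₀ i : ℕ)) + (δ : ℕ)) *
        max 0 (Finset.univ.inf' H (fun i => y i - ((ε₀ i : ℕ) : ℝ)) - ((δ : ℕ) : ℝ)) := by
    intro δ ε₀
    rw [hsnoc]
    congr 1
    have hcomp := Finset.apply_inf'_eq_inf'_comp (γ := ℝ) H (f := fun i => y i - ((ε₀ i : ℕ) : ℝ))
      (fun v => v - ((δ : ℕ) : ℝ)) (fun a b => by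
        show min a b - _ = min _ _
        exact sub_const_min _ a b)
    simp only [Function.comp] at hcomp
    congr 1
    rw [← Finset.inf'_univ_eq_ciInf (f := fun i : Fin d =>
      y i - (((Fin.snocEquiv (fun _ => Fin 2) (δ, ε₀)) (Fin.castSucc i) : ℕ) : ℝ)
        - (((Fin.snocEquiv (fun _ => Fin 2) (δ, ε₀)) (Fin.last d) : ℕ) : ℝ)), hcomp]
    apply Finset.inf'_congr _ rfl
    intro i _
    simp [Fin.snocEquiv, Fin.snoc_castSucc, Fin.snoc_last]
  rw [Finset.sum_congr rfl (fun δ _ => Finset.sum_congr rfl (fun ε₀ _ => key δ ε₀))]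
  rw [Finset.sum_comm]
  have hδ : ∀ ε₀ : Fin d → Fin 2,
      (∑ δ : Fin 2, (-1 : ℝ) ^ ((∑ i, (ε₀ i : ℕ)) + (δ : ℕ)) *
        max 0 (Finset.univ.inf' H (fun i => y i - ((ε₀ i : ℕ) : ℝ)) - ((δ : ℕ) : ℝ)))
      = (-1 : ℝ) ^ (∑ i, (ε₀ i : ℕ)) *
        clampBS (Finset.univ.inf' H (fun i => y i - ((ε₀ i : ℕ) : ℝ))) := by
    intro ε₀
    rw [Fin.sum_univ_two]
    simp only [Fin.val_zero, Fin.val_one, Nat.cast_zero, Nat.cast_one, add_zero, sub_zero, pow_succ]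
    rw [← max_sub_max_sub_one]
    ring
  rw [Finset.sum_congr rfl (fun ε₀ _ => hδ ε₀)]
  -- reindex by subsets
  rw [← Fintype.sum_bijective _ (fin2_indicator_bij d) _ _ (fun A => rfl)]
  have hA : ∀ A : Finset (Fin d),
      (-1 : ℝ) ^ (∑ i, (((if i ∈ A then (1 : Fin 2) else 0) : Fin 2) : ℕ)) *
        clampBS (Finset.univ.inf' H (fun i => y i - (((if i ∈ A then (1 : Fin 2) else 0) : Fin 2) : ℕ)))
      = (-1 : ℝ) ^ A.card *
        Finset.univ.inf' H (fun i => if i ∈ A then clampBS (y i - 1) else clampBS (y i)) := by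
    intro A
    have hcard : (∑ i, (((if i ∈ A then (1 : Fin 2) else 0) : Fin 2) : ℕ)) = A.card := by
      have : ∀ i : Fin d, (((if i ∈ A then (1 : Fin 2) else 0) : Fin 2) : ℕ)
          = if i ∈ A then 1 else 0 := by
        intro i; by_cases h : i ∈ A <;> simp [h]
      rw [Finset.sum_congr rfl (fun i _ => this i), Finset.sum_ite_mem, Finset.univ_inter,
        Finset.sum_const, smul_eq_mul, mul_one]
    rw [hcard]
    congr 1
    have hcl := Finset.apply_inf'_eq_inf'_comp (γ := ℝ) H
      (f := fun i => y i - (((if i ∈ A then (1 : Fin 2) else 0) : Fin 2) : ℕ)) clampBS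
      (fun a b => clampBS_min a b)
    simp only [Function.comp] at hcl
    rw [hcl]
    apply Finset.inf'_congr _ rfl
    intro i _
    by_cases h : i ∈ A <;> simp [h]
  rw [Finset.sum_congr rfl (fun A _ => hA A)]
  rw [← Finset.powerset_univ, lemA _ _ _ H (fun i _ => clampBS_mono (by linarith))]
  have hq := Finset.apply_inf'_eq_inf'_comp (γ := ℝ) H (f := y) clampBS
    (fun a b => clampBS_min a b)
  have hp := Finset.apply_sup'_eq_sup'_comp (γ := ℝ) H (f := fun i => y i - 1) clampBS
    (fun a b => clampBS_max a b)
  have hsub := Finset.apply_sup'_eq_sup'_comp (γ := ℝ) H (f := y)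
    (fun v => v - 1) (fun a b => by
      show max a b - _ = max _ _
      exact sub_const_max _ a b)
  simp only [Function.comp] at hq hp hsub
  rw [hq, hsub, hp]

end ClosedForm

lemma clampBS_of_nonpos {v : ℝ} (h : v ≤ 0) : clampBS v = 0 := by
  unfold clampBS
  rw [max_eq_left]
  exact le_trans (min_le_right _ _) h

lemma clampBS_of_one_le {v : ℝ} (h : 1 ≤ v) : clampBS v = 1 := by
  unfold clampBS
  rw [min_eq_left h, max_eq_right zero_le_one]

lemma boxSplineD_support {d : ℕ} (hd : 1 ≤ d) (y : Fin d → ℝ) (j : Fin d)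
    (h : y j ≤ 0 ∨ 2 ≤ y j) : boxSplineD d y = 0 := by
  have H : (Finset.univ : Finset (Fin d)).Nonempty := ⟨⟨0, hd⟩, Finset.mem_univ _⟩
  rw [boxSplineD_closed hd y]
  rcases h with h | h
  · have h1 : (Finset.univ : Finset (Fin d)).inf' H y ≤ 0 :=
      le_trans (Finset.inf'_le y (Finset.mem_univ j)) h
    rw [max_eq_left]
    have := clampBS_nonneg ((Finset.univ : Finset (Fin d)).sup' H y - 1)
    have h2 : clampBS ((Finset.univ : Finset (Fin d)).inf' H y) = 0 := clampBS_of_nonpos h1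
    rw [h2]
    linarith
  · have h1 : (1 : ℝ) ≤ (Finset.univ : Finset (Fin d)).sup' H y - 1 := by
      have := Finset.le_sup' y (Finset.mem_univ j)
      linarith
    rw [max_eq_left]
    rw [clampBS_of_one_le h1]
    have := clampBS_le_one ((Finset.univ : Finset (Fin d)).inf' H y)
    linarith

lemma clampBS_eq_self {v : ℝ} (h0 : 0 ≤ v) (h1 : v ≤ 1) : clampBS v = v := by
  unfold clampBS
  rw [min_eq_right h1, max_eq_right h0]

lemma boxSplineD_at_simplex {d : ℕ} (hd : 1 ≤ d) (t : Fin d → ℝ)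
    (ht : ∀ i, 0 ≤ t i ∧ t i < 1) (A : Finset (Fin d)) :
    boxSplineD d (fun i => t i + 1 - (if i ∈ A then (1:ℝ) else 0))
      = max 0 (mAux t Finset.univ A) := by
  have H : (Finset.univ : Finset (Fin d)).Nonempty := ⟨⟨0, hd⟩, Finset.mem_univ _⟩
  set v : Fin d → ℝ := fun i => t i + 1 - (if i ∈ A then (1:ℝ) else 0) with hv
  rw [boxSplineD_closed hd v, mAux]
  set B := Finset.univ \ A with hB
  congr 1
  congr 1
  -- inf part
  · rcases A.eq_empty_or_nonempty with rfl | hA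
    · rw [dif_neg (by simp)]
      apply clampBS_of_one_le
      apply (Finset.le_inf'_iff _ _).2
      intro i _
      simp only [hv, Finset.notMem_empty, if_false]
      linarith [(ht i).1]
    · rw [dif_pos hA]
      obtain ⟨j0, hj0⟩ := id hA
      have hAinf0 : 0 ≤ A.inf' hA t := Finset.le_inf' hA t (fun i hi => (ht i).1)
      have hAinf1 : A.inf' hA t < 1 :=
        lt_of_le_of_lt (Finset.inf'_le t hj0) (ht j0).2
      have hAv : A.inf' hA v = A.inf' hA t :=
        Finset.inf'_congr hA rfl (fun i hi => by simp [hv, hi])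
      rcases B.eq_empty_or_nonempty with hBe | hBne
      · have hAuniv : A = Finset.univ := by
          rw [hB] at hBe
          have := Finset.sdiff_eq_empty_iff_subset.1 hBe
          exact le_antisymm (Finset.subset_univ A) this
        have : (Finset.univ : Finset (Fin d)).inf' H v = A.inf' hA t := by
          rw [← hAv]
          apply Finset.inf'_congr H hAuniv.symm (fun i _ => rfl)
        rw [this, clampBS_eq_self hAinf0 (le_of_lt hAinf1)]
      · have hU : (Finset.univ : Finset (Fin d)) = A ∪ B := by
          rw [hB, Finset.union_sdiff_of_subset (Finset.subset_univ A)]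
        have h1 : (Finset.univ : Finset (Fin d)).inf' H v
            = A.inf' hA v ⊓ B.inf' hBne v := by
          rw [Finset.inf'_congr H hU (fun i _ => rfl), Finset.inf'_union hA hBne]
        have hBv : (1:ℝ) ≤ B.inf' hBne v := by
          rw [Finset.le_inf'_iff]
          intro i hi
          have : i ∉ A := (Finset.mem_sdiff.1 (hB ▸ hi)).2
          simp only [hv, this, if_false]
          linarith [(ht i).1]
        rw [h1, hAv]
        have : A.inf' hA t ⊓ B.inf' hBne v = A.inf' hA t := by
          rw [inf_eq_left]
          linarith
        rw [this, clampBS_eq_self hAinf0 (le_of_lt hAinf1)]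
  -- sup part
  · have hsub := Finset.apply_sup'_eq_sup'_comp (γ := ℝ) H (f := v)
      (fun z => z - 1) (fun a b => by
        show max a b - _ = max _ _
        exact sub_const_max _ a b)
    simp only [Function.comp] at hsub
    rw [hsub]
    set w : Fin d → ℝ := fun i => v i - 1 with hw
    have hwA : ∀ i ∈ A, w i = t i - 1 := fun i hi => by simp [hw, hv, hi]
    have hwB : ∀ i ∈ B, w i = t i := fun i hi => by
      have : i ∉ A := (Finset.mem_sdiff.1 (hB ▸ hi)).2
      simp [hw, hv, this]
    rcases B.eq_empty_or_nonempty with hBe | hBne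
    · rw [dif_neg (by rw [hBe]; simp)]
      have hAuniv : A = Finset.univ := by
        rw [hB] at hBe
        exact le_antisymm (Finset.subset_univ A)
          (Finset.sdiff_eq_empty_iff_subset.1 hBe)
      apply clampBS_of_nonpos
      apply le_of_lt
      rw [Finset.sup'_lt_iff]
      intro i _
      rw [hwA i (by rw [hAuniv]; exact Finset.mem_univ i)]
      linarith [(ht i).2]
    · rw [dif_pos hBne]
      have hB0 : 0 ≤ B.sup' hBne t := by
        obtain ⟨j1, hj1⟩ := id hBne
        exact le_trans (ht j1).1 (Finset.le_sup' t hj1)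
      have hB1 : B.sup' hBne t < 1 := by
        rw [Finset.sup'_lt_iff]
        exact fun i _ => (ht i).2
      have hBw : B.sup' hBne w = B.sup' hBne t := Finset.sup'_congr hBne rfl hwB
      rcases A.eq_empty_or_nonempty with rfl | hA
      · have hBuniv : B = Finset.univ := by rw [hB]; simp
        have : (Finset.univ : Finset (Fin d)).sup' H w = B.sup' hBne t := by
          rw [← hBw]
          exact (Finset.sup'_congr hBne hBuniv (fun i _ => rfl)).symm
        rw [this, clampBS_eq_self hB0 (le_of_lt hB1)]
      · have hU : (Finset.univ : Finset (Fin d)) = A ∪ B := by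
          rw [hB, Finset.union_sdiff_of_subset (Finset.subset_univ A)]
        have h1 : (Finset.univ : Finset (Fin d)).sup' H w
            = A.sup' hA w ⊔ B.sup' hBne w := by
          rw [Finset.sup'_congr H hU (fun i _ => rfl), Finset.sup'_union hA hBne]
        have hAw : A.sup' hA w < 0 := by
          rw [Finset.sup'_lt_iff]
          intro i hi
          rw [hwA i hi]
          linarith [(ht i).2]
        rw [h1, hBw]
        have : A.sup' hA w ⊔ B.sup' hBne t = B.sup' hBne t := by
          rw [sup_eq_right]
          linarith
        rw [this, clampBS_eq_self hB0 (le_of_lt hB1)]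

/-- the integer shifts of the Cartesian linear box spline reproduce affine
functions: `Σ_{k ∈ ℤ^d} (aᵀk + b) D(x + 1 − k) = aᵀx + b` for all `x ∈ ℝ^d`, the sum having
finitely many nonzero terms. -/
theorem boxSpline_reproduces_affine (d : ℕ) (hd : 1 ≤ d) (a : Fin d → ℝ) (b : ℝ)
    (x : Fin d → ℝ) :
    {k : Fin d → ℤ |
        ((∑ i, a i * (k i : ℝ)) + b) * boxSplineD d (fun i => x i + 1 - (k i : ℝ)) ≠ 0}.Finite ∧
    ∑ᶠ k : Fin d → ℤ,
        ((∑ i, a i * (k i : ℝ)) + b) * boxSplineD d (fun i => x i + 1 - (k i : ℝ)) =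
      (∑ i, a i * x i) + b := by
  classical
  set m : Fin d → ℤ := fun i => ⌊x i⌋ with hm
  set t : Fin d → ℝ := fun i => x i - (⌊x i⌋ : ℝ) with htdef
  have ht : ∀ i, 0 ≤ t i ∧ t i < 1 := fun i => by
    constructor
    · simp only [htdef]
      linarith [Int.floor_le (x i)]
    · simp only [htdef]
      linarith [Int.lt_floor_add_one (x i)]
  set F : (Fin d → ℤ) → ℝ := fun k =>
    ((∑ i, a i * (k i : ℝ)) + b) * boxSplineD d (fun i => x i + 1 - (k i : ℝ)) with hF
  set s : Finset (Fin d → ℤ) := Fintype.piFinset (fun j => ({m j, m j + 1} : Finset ℤ)) with hs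
  have hsupp : ∀ k : Fin d → ℤ, F k ≠ 0 → k ∈ s := by
    intro k hk
    rw [hs, Fintype.mem_piFinset]
    intro j
    simp only [Finset.mem_insert, Finset.mem_singleton]
    by_contra hcon
    push_neg at hcon
    obtain ⟨h1, h2⟩ := hcon
    apply hk
    have hz : boxSplineD d (fun i => x i + 1 - (k i : ℝ)) = 0 := by
      apply boxSplineD_support hd _ j
      rcases lt_or_ge (k j) (m j) with hlt | hle
      · right
        have : (k j : ℝ) ≤ (m j : ℝ) - 1 := by
          have : k j ≤ m j - 1 := by omega
          exact_mod_cast this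
        have hfl : (m j : ℝ) ≤ x j := Int.floor_le (x j)
        show 2 ≤ x j + 1 - (k j : ℝ)
        linarith
      · left
        have hge : m j + 2 ≤ k j := by omega
        have : (m j : ℝ) + 2 ≤ (k j : ℝ) := by exact_mod_cast hge
        have hfl : x j < (m j : ℝ) + 1 := Int.lt_floor_add_one (x j)
        show x j + 1 - (k j : ℝ) ≤ 0
        linarith
    show ((∑ i, a i * ((k i : ℤ) : ℝ)) + b) * boxSplineD d (fun i => x i + 1 - ((k i : ℤ) : ℝ)) = 0
    rw [hz, mul_zero]
  have hfin : {k : Fin d → ℤ | F k ≠ 0}.Finite :=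
    Set.Finite.subset s.finite_toSet (fun k hk => hsupp k hk)
  refine ⟨hfin, ?_⟩
  rw [show (∑ᶠ k : Fin d → ℤ,
      ((∑ i, a i * (k i : ℝ)) + b) * boxSplineD d (fun i => x i + 1 - (k i : ℝ)))
      = ∑ᶠ k, F k from rfl]
  rw [finsum_eq_sum_of_support_subset F (fun k hk => hsupp k hk)]
  -- reindex over subsets
  have hre : ∑ k ∈ s, F k
      = ∑ A ∈ (Finset.univ : Finset (Fin d)).powerset,
          F (fun j => m j + if j ∈ A then 1 else 0) := by
    refine (Finset.sum_nbij'
      (i := fun (A : Finset (Fin d)) => (fun j => m j + if j ∈ A then 1 else 0 : Fin d → ℤ))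
      (j := fun (k : Fin d → ℤ) => Finset.univ.filter (fun j => k j = m j + 1))
      ?_ ?_ ?_ ?_ ?_).symm
    · intro A _
      rw [Fintype.mem_piFinset]
      intro j
      by_cases h : j ∈ A <;> simp [h]
    · intro k _
      exact Finset.mem_powerset.2 (Finset.filter_subset _ _)
    · intro A _
      ext j
      simp only [Finset.mem_filter, Finset.mem_univ, true_and]
      by_cases h : j ∈ A <;> simp [h] <;> omega
    · intro k hk
      funext j
      have := (Fintype.mem_piFinset.1 hk) j
      simp only [Finset.mem_insert, Finset.mem_singleton] at this
      simp only [Finset.mem_filter, Finset.mem_univ, true_and]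
      rcases this with h | h <;> rw [h] <;> simp <;> omega
    · intro A _
      rfl
  rw [hre]
  have hval : ∀ A ∈ (Finset.univ : Finset (Fin d)).powerset,
      F (fun j => m j + if j ∈ A then 1 else 0)
      = (((∑ i, a i * (m i : ℝ)) + b) + ∑ i ∈ A, a i) * max 0 (mAux t Finset.univ A) := by
    intro A _
    show ((∑ i, a i * (((m i + if i ∈ A then 1 else 0 : ℤ)) : ℝ)) + b) *
        boxSplineD d (fun i => x i + 1 - (((m i + if i ∈ A then 1 else 0 : ℤ)) : ℝ))
      = (((∑ i, a i * (m i : ℝ)) + b) + ∑ i ∈ A, a i) * max 0 (mAux t Finset.univ A)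
    have hcoef : (∑ i, a i * (((m i + if i ∈ A then 1 else 0 : ℤ)) : ℝ)) + b
        = ((∑ i, a i * (m i : ℝ)) + b) + ∑ i ∈ A, a i := by
      have h1 : ∀ i : Fin d, a i * (((m i + if i ∈ A then 1 else 0 : ℤ)) : ℝ)
          = a i * (m i : ℝ) + (if i ∈ A then a i else 0) := by
        intro i
        by_cases h : i ∈ A <;> simp [h] <;> push_cast <;> ring
      rw [Finset.sum_congr rfl (fun i _ => h1 i), Finset.sum_add_distrib,
        Finset.sum_ite_mem, Finset.univ_inter]
      ring
    rw [hcoef]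
    congr 1
    have harg : (fun i => x i + 1 - (((m i + if i ∈ A then 1 else 0 : ℤ)) : ℝ))
        = (fun i => t i + 1 - (if i ∈ A then (1:ℝ) else 0)) := by
      funext i
      by_cases h : i ∈ A <;>
        simp only [htdef, hm, h, if_true, if_false, Int.cast_add, Int.cast_one, Int.cast_zero,
          add_zero] <;> ring
    rw [harg, boxSplineD_at_simplex hd t ht A]
  rw [Finset.sum_congr rfl hval]
  rw [lemB t a Finset.univ ((∑ i, a i * (m i : ℝ)) + b) (fun i _ => ht i)]
  have : ∀ i : Fin d, a i * (m i : ℝ) + a i * t i = a i * x i := by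
    intro i
    simp only [htdef, hm]
    ring
  rw [add_comm ((∑ i, a i * (m i : ℝ))) b, add_assoc, ← Finset.sum_add_distrib]
  rw [Finset.sum_congr rfl (fun i _ => this i)]
  ring
end

section
/- Let d ≥ 1 and let D : ℝ^d → ℝ be the Cartesian linear box spline. Then D(x) ≥ 0 for every x ∈ ℝ^d. -/
/-!
By inclusion–exclusion over `ε ∈ {0,1}ⁿ⁺¹`, the alternating sum
`Σ_ε (-1)^{|ε|} (min_i (y_i - ε_i) - s)_+` is the length of `{t ≥ s | y_i - 1 ≤ t ≤ y_i ∀ i}`,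
that is `(min y - max (max y - 1, s))_+`, an antitone function of `s`. Splitting the box spline
along its last coordinate `ε_{d+1}` writes `D(x)` as this length at `s = 0` minus the one at `s = 1`.
-/

section ConditionallyCompleteLinearOrder

variable {α : Type*} [ConditionallyCompleteLinearOrder α] {n : ℕ}

theorem Fin.ciInf_castSucc (f : Fin (n + 2) → α) :
    ⨅ i, f i = min (⨅ i : Fin (n + 1), f i.castSucc) (f (Fin.last _)) := by
  have hf := Finite.bddBelow_range f
  refine le_antisymm (le_min (le_ciInf fun i => ciInf_le hf _) (ciInf_le hf _))
    (le_ciInf fun i => ?_)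
  induction i using Fin.lastCases with
  | last => exact min_le_right _ _
  | cast i => exact (min_le_left _ _).trans (ciInf_le (Finite.bddBelow_range _) i)

theorem Fin.ciSup_castSucc (f : Fin (n + 2) → α) :
    ⨆ i, f i = max (⨆ i : Fin (n + 1), f i.castSucc) (f (Fin.last _)) :=
  Fin.ciInf_castSucc (α := αᵒᵈ) f

end ConditionallyCompleteLinearOrder

theorem Fin.sum_pi_snoc {n : ℕ} {β M : Type*} [Fintype β] [AddCommMonoid M]
    (F : (Fin (n + 1) → β) → M) :
    ∑ ε, F ε = ∑ ε : Fin n → β, ∑ j, F (Fin.snoc ε j) := by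
  rw [← (Fin.snocEquiv fun _ => β).sum_comp, Fintype.sum_prod_type_right]
  rfl

theorem Real.ciInf_sub {ι : Type*} [Finite ι] [Nonempty ι] (f : ι → ℝ) (c : ℝ) :
    ⨅ i, (f i - c) = (⨅ i, f i) - c := by
  simp only [sub_eq_add_neg]
  exact ((OrderIso.addRight (-c)).map_ciInf (Finite.bddBelow_range f)).symm

theorem max_zero_min_sub (b t s : ℝ) :
    max 0 (min b t - s) = max 0 (b - s) - max 0 (b - max s t) := by
  simp only [max_def, min_def]
  split_ifs <;> linarith

open Finset

noncomputable def cubeDiffTruncMin (n : ℕ) (y : Fin (n + 1) → ℝ) (s : ℝ) : ℝ :=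
  ∑ ε : Fin (n + 1) → Fin 2, (-1 : ℝ) ^ (∑ i, (ε i : ℕ)) * max 0 ((⨅ i, (y i - (ε i : ℕ))) - s)

theorem cubeDiffTruncMin_zero (y : Fin 1 → ℝ) (s : ℝ) :
    cubeDiffTruncMin 0 y s = max 0 (y 0 - s) - max 0 (y 0 - 1 - s) := by
  simp [cubeDiffTruncMin, Fin.sum_pi_snoc, Fin.sum_univ_two, Fin.snoc, sub_eq_add_neg]

theorem cubeDiffTruncMin_succ {n : ℕ} (y : Fin (n + 2) → ℝ) (s : ℝ) :
    cubeDiffTruncMin (n + 1) y s =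
      cubeDiffTruncMin n (Fin.init y) (max s (y (Fin.last _) - 1)) -
        cubeDiffTruncMin n (Fin.init y) (max s (y (Fin.last _))) := by
  simp only [cubeDiffTruncMin, Fin.sum_pi_snoc (n := n + 1), Fin.sum_univ_two, ← sum_sub_distrib]
  refine sum_congr rfl fun ε _ => ?_
  simp only [Fin.sum_univ_castSucc (n := n + 1), Fin.ciInf_castSucc, Fin.snoc_castSucc,
    Fin.snoc_last, max_zero_min_sub, Fin.init]
  norm_num
  ring

theorem cubeDiffTruncMin_eq (n : ℕ) (y : Fin (n + 1) → ℝ) (s : ℝ) :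
    cubeDiffTruncMin n y s = max 0 ((⨅ i, y i) - max ((⨆ i, y i) - 1) s) := by
  induction n generalizing s with
  | zero =>
    rw [cubeDiffTruncMin_zero, ciInf_unique (ι := Fin 1), ciSup_unique (ι := Fin 1)]
    simp only [Fin.default_eq_zero, max_def]
    split_ifs <;> linarith
  | succ n ih =>
    rw [cubeDiffTruncMin_succ, ih, ih, Fin.ciInf_castSucc, Fin.ciSup_castSucc]
    have h1 (a s t : ℝ) : max (a - 1) (max s t) = max (max (a - 1) (max s (t - 1))) t := by
      simp only [max_def]; split_ifs <;> linarith
    have h2 (a s t : ℝ) : max (max a t - 1) s = max (a - 1) (max s (t - 1)) := by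
      simp only [max_def]; split_ifs <;> linarith
    rw [h2, max_zero_min_sub, ← h1]
    rfl

theorem cubeDiffTruncMin_antitone (n : ℕ) (y : Fin (n + 1) → ℝ) :
    Antitone (cubeDiffTruncMin n y) := fun s t hst => by
  simp only [cubeDiffTruncMin_eq]
  gcongr

theorem boxSplineD_succ (n : ℕ) (x : Fin (n + 1) → ℝ) :
    boxSplineD (n + 1) x = cubeDiffTruncMin n x 0 - cubeDiffTruncMin n x 1 := by
  simp only [boxSplineD, cubeDiffTruncMin, Fin.sum_pi_snoc (n := n + 1), Fin.sum_univ_two,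
    ← sum_sub_distrib, Fin.sum_univ_castSucc (n := n + 1), Fin.snoc_castSucc, Fin.snoc_last,
    Real.ciInf_sub]
  refine sum_congr rfl fun ε _ => ?_
  norm_num
  ring

/-- the Cartesian linear box spline is nonnegative. -/
theorem boxSpline_nonneg (d : ℕ) (hd : 1 ≤ d) (x : Fin d → ℝ) :
    0 ≤ boxSplineD d x := by
  obtain ⟨n, rfl⟩ := Nat.exists_eq_add_of_le' hd
  rw [boxSplineD_succ, sub_nonneg]
  exact cubeDiffTruncMin_antitone n x zero_le_one
end

section
/- Let d ≥ 1 and let D : ℝ^d → ℝ be the Cartesian linear box spline. Then for every integer p ≥ 1, ∫_{ℝ^d} D(x)^p dx = (d+1) · C(p+d, d)^{-1}, where C(p+d, d) is the binomial coefficient. In particular ∫_{ℝ^d} D(x) dx = 1 and ∫_{ℝ^d} D(x)² dx = 2/(d+2). -/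
open MeasureTheory

open Set
open scoped Nat ENNReal

/-!
Each term `max 0 (min_i (x_i - ε_i - ε_{d+1}))` is the length of
`{s | ε_{d+1} < s ∧ ∀ i, s ≤ x_i - ε_i}`, so inclusion–exclusion over `ε` collapses the alternating
sum to the length of `{s ∈ (0,1] | ∀ i, s ≤ x_i < s + 1}`. Hence `D(x)^p` is the volume of a set
of `p`-tuples `t`, and Tonelli turns `∫ D^p` into `∫_{(0,1]^p} (min t + (1 - max t))^d dt`.
A binomial expansion reduces this to the moments
`∫_{(0,1]^p} (min t)^k (1 - max t)^m dt = k! m! p! / (k+m+p)!`, obtained by induction on `p`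
(integrating out one coordinate) from a Beta integral; summing over `k` gives
`(d+1) d! p! / (d+p)!`.
-/

theorem sum_neg_one_pow_mul_measureReal_iInter {α ι : Type*} [MeasurableSpace α] [Fintype ι]
    [DecidableEq ι]
    (μ : Measure α) (C : ι → Fin 2 → Set α) (hC : ∀ i, C i 1 ⊆ C i 0)
    (hCm : ∀ i j, MeasurableSet (C i j)) (hμ : μ (⋂ i, C i 0) ≠ ⊤) :
    ∑ ε : ι → Fin 2, (-1 : ℝ) ^ (∑ i, (ε i : ℕ)) * μ.real (⋂ i, C i (ε i)) =
      μ.real (⋂ i, (C i 0 \ C i 1)) := by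
  have hind (S : ι → Set α) :
      (⋂ i, S i).indicator (1 : α → ℝ) = fun a => ∏ i, (S i).indicator 1 a :=
    funext fun a => by simp [prod_indicator_const_apply]
  have hsub (ε : ι → Fin 2) : (⋂ i, C i (ε i)) ⊆ ⋂ i, C i 0 :=
    iInter_mono fun i => by
      rcases Fin.exists_fin_two.mp ⟨ε i, rfl⟩ with h | h <;> rw [h]
      exact hC i
  have hint (ε : ι → Fin 2) :
      Integrable (fun a => ∏ i, (C i (ε i)).indicator (1 : α → ℝ) a) μ := by
    rw [← hind]
    exact (integrable_indicator_iff (MeasurableSet.iInter fun i => hCm i _)).2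
      (integrableOn_const ((measure_mono (hsub ε)).trans_lt hμ.lt_top).ne)
  simp_rw [← integral_indicator_one (MeasurableSet.iInter fun i => hCm _ _), hind,
    ← integral_const_mul]
  rw [← integral_finsetSum _ fun ε _ => (hint ε).const_mul _,
    ← integral_indicator_one (MeasurableSet.iInter fun i => (hCm i 0).diff (hCm i 1)), hind]
  congr 1
  funext a
  -- the signed sum of products of indicators factors as `∏ i, (𝟙 (C i 0) - 𝟙 (C i 1))`
  simp_rw [indicator_sdiff (hC _), ← Finset.prod_pow_eq_pow_sum, ← Finset.prod_mul_distrib]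
  refine (Fintype.prod_sum fun i (e : Fin 2) =>
    (-1 : ℝ) ^ (e : ℕ) * (C i e).indicator 1 a).symm.trans ?_
  simp [Fin.sum_univ_two, sub_eq_add_neg]

def boxSplineSlice {n : ℕ} (x : Fin n → ℝ) : Set ℝ :=
  {s | s ∈ Ioc 0 1 ∧ ∀ i, x i ∈ Ico s (s + 1)}

theorem boxSplineD_eq_measureReal {d : ℕ} (x : Fin (d + 1) → ℝ) :
    boxSplineD (d + 1) x = volume.real (boxSplineSlice x) := by
  let C : Fin (d + 2) → Fin 2 → Set ℝ :=
    Fin.lastCases (fun e => Ioi (e : ℝ)) (fun i e => Iic (x i - e))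
  have hC_last (e : Fin 2) : C (Fin.last _) e = Ioi (e : ℝ) := by simp [C]
  have hC_castSucc (i : Fin (d + 1)) (e : Fin 2) : C (Fin.castSucc i) e = Iic (x i - e) := by
    simp [C]
  have hmem (S : Fin (d + 2) → Set ℝ) (s : ℝ) :
      s ∈ ⋂ j, S j ↔ s ∈ S (Fin.last _) ∧ ∀ i, s ∈ S (Fin.castSucc i) := by
    rw [mem_iInter, Fin.forall_fin_succ', and_comm]
  have hC : ∀ j, C j 1 ⊆ C j 0 :=
    Fin.lastCases (by simp [hC_last]) (fun i => by simp [hC_castSucc])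
  have hCm : ∀ j e, MeasurableSet (C j e) :=
    Fin.lastCases (by simp [hC_last]) (fun i e => by simp [hC_castSucc, measurableSet_Iic])
  have hfin : volume (⋂ j, C j 0) ≠ ⊤ := by
    refine ne_top_of_le_ne_top (measure_Ioc_lt_top (a := 0) (b := x 0)).ne (measure_mono ?_)
    intro s hs
    simp only [hmem, hC_last, hC_castSucc, mem_Ioi, mem_Iic] at hs
    exact ⟨by simpa using hs.1, by simpa using hs.2 0⟩
  have hterm (ε : Fin (d + 2) → Fin 2) :
      max 0 (⨅ i : Fin (d + 1), (x i - ((ε (Fin.castSucc i) : ℕ) : ℝ) - ((ε (Fin.last _) : ℕ) : ℝ)))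
        = volume.real (⋂ j, C j (ε j)) := by
    have hset : (⋂ j, C j (ε j)) = Ioc (ε (Fin.last _) : ℝ) ((ε (Fin.last _) : ℝ) +
        ⨅ i : Fin (d + 1), (x i - ((ε (Fin.castSucc i) : ℕ) : ℝ)
          - ((ε (Fin.last _) : ℕ) : ℝ))) := by
      ext s
      simp only [hmem, hC_last, hC_castSucc, mem_Ioc, mem_Ioi, mem_Iic, ← sub_le_iff_le_add',
        le_ciInf_iff (Finite.bddBelow_range _), sub_le_sub_iff_right]
    rw [hset, Real.volume_real_Ioc, add_sub_cancel_left, max_comm]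
  simp_rw [boxSplineD, hterm]
  rw [sum_neg_one_pow_mul_measureReal_iInter volume C hC hCm hfin]
  congr 1
  ext s
  simp only [hmem, hC_last, hC_castSucc, boxSplineSlice, mem_sdiff, mem_Ioi, mem_Iic, mem_Ioc,
    mem_Ico, mem_ofPred_eq, Fin.val_zero, Fin.val_one, Nat.cast_zero, Nat.cast_one, sub_zero,
    not_lt, not_le, sub_lt_iff_lt_add]

theorem measurable_boxSplineD (d : ℕ) : Measurable (boxSplineD d) :=
  Finset.measurable_sum _ fun _ _ => (measurable_const.max
    (Measurable.iInf fun i => ((measurable_pi_apply i).sub_const _).sub_const _)).const_mul _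

theorem lintegral_volume_boxSplineSlice_pow (n p : ℕ) :
    ∫⁻ x : Fin n → ℝ, volume (boxSplineSlice x) ^ p =
      ∫⁻ t, volume (⋂ j, Ico (t j) (t j + 1)) ^ n
        ∂Measure.pi fun _ : Fin p => volume.restrict (Ioc (0 : ℝ) 1) := by
  let E : Set ((Fin n → ℝ) × (Fin p → ℝ)) :=
    {q | ∀ j, q.2 j ∈ Ioc 0 1 ∧ ∀ i, q.1 i ∈ Ico (q.2 j) (q.2 j + 1)}
  have hE : MeasurableSet E := by
    simp only [E, mem_Ioc, mem_Ico, ofPred_forall, ofPred_and]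
    exact .iInter fun j => ((measurableSet_lt measurable_const (by fun_prop)).inter
      (measurableSet_le (by fun_prop) measurable_const)).inter (.iInter fun i =>
        (measurableSet_le (by fun_prop) (by fun_prop)).inter
          (measurableSet_lt (by fun_prop) (by fun_prop)))
  have hx (x : Fin n → ℝ) : Prod.mk x ⁻¹' E = univ.pi fun _ => boxSplineSlice x := by
    ext t
    simp [E, boxSplineSlice]
  have ht (t : Fin p → ℝ) : volume ((fun x => (x, t)) ⁻¹' E) =
      (univ.pi fun _ => Ioc 0 1).indicator (fun t => volume (⋂ j, Ico (t j) (t j + 1)) ^ n) t := by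
    by_cases hcube : t ∈ univ.pi fun _ => Ioc (0 : ℝ) 1
    · have : (fun x => (x, t)) ⁻¹' E = univ.pi fun _ => ⋂ j, Ico (t j) (t j + 1) := by
        ext x
        simp only [mem_pi, mem_univ, forall_const] at hcube
        simp only [E, mem_preimage, mem_ofPred_eq, mem_pi, mem_univ, forall_const, mem_iInter]
        exact ⟨fun h i j => (h j).2 i, fun h j => ⟨hcube j, fun i => h i j⟩⟩
      rw [indicator_of_mem hcube, this, volume_pi_pi, Finset.prod_const, Finset.card_univ,
        Fintype.card_fin]
    · have : (fun x => (x, t)) ⁻¹' E = ∅ := by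
        ext x
        simp only [mem_pi, mem_univ, forall_const] at hcube
        simp only [E, mem_preimage, mem_ofPred_eq, mem_empty_iff_false, iff_false]
        exact fun h => hcube fun j => (h j).1
      rw [indicator_of_notMem hcube, this, measure_empty]
  calc ∫⁻ x : Fin n → ℝ, volume (boxSplineSlice x) ^ p
      = ∫⁻ x, volume (Prod.mk x ⁻¹' E) := by
        simp_rw [hx, volume_pi_pi, Finset.prod_const, Finset.card_univ, Fintype.card_fin]
    _ = ∫⁻ t, volume ((fun x => (x, t)) ⁻¹' E) := by
        rw [← Measure.prod_apply hE, Measure.prod_apply_symm hE]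
    _ = _ := by
        simp_rw [ht]
        rw [lintegral_indicator (.univ_pi fun _ => measurableSet_Ioc), volume_pi,
          Measure.restrict_pi_pi]

theorem iInter_Ico_add_eq {ι : Type*} [Finite ι] [Nonempty ι] (t : ι → ℝ) (c : ℝ) :
    ⋂ j, Ico (t j) (t j + c) = Ico (⨆ j, t j) ((⨅ j, t j) + c) := by
  ext x
  obtain ⟨j₀, hj₀⟩ := exists_eq_ciInf_of_finite (f := t)
  simp only [mem_iInter, mem_Ico]
  refine ⟨fun h => ⟨ciSup_le fun j => (h j).1, hj₀ ▸ (h j₀).2⟩, fun h j => ?_⟩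
  exact ⟨(le_ciSup (Finite.bddAbove_range t) j).trans h.1,
    h.2.trans_le ((add_le_add_iff_right c).2 (ciInf_le (Finite.bddBelow_range t) j))⟩

theorem zero_lt_ciInf_le_ciSup_le_one {ι : Type*} [Finite ι] [Nonempty ι] {t : ι → ℝ}
    (ht : ∀ j, t j ∈ Ioc 0 1) : 0 < ⨅ j, t j ∧ (⨅ j, t j) ≤ ⨆ j, t j ∧ (⨆ j, t j) ≤ 1 := by
  obtain ⟨j, hj⟩ := exists_eq_ciInf_of_finite (f := t)
  exact ⟨hj ▸ (ht j).1, ciInf_le_ciSup (Finite.bddBelow_range t) (Finite.bddAbove_range t),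
    ciSup_le fun j => (ht j).2⟩

namespace intervalIntegral

theorem integral_pow_mul_one_sub_pow (k m : ℕ) :
    ∫ s in (0 : ℝ)..1, s ^ k * (1 - s) ^ m = k ! * m ! / (k + m + 1)! := by
  induction m generalizing k with
  | zero =>
    simp [Nat.factorial_succ]
    field_simp
  | succ m ih =>
    have hsplit (s : ℝ) :
        s ^ k * (1 - s) ^ (m + 1) = s ^ k * (1 - s) ^ m - s ^ (k + 1) * (1 - s) ^ m := by
      ring
    simp_rw [hsplit]
    rw [integral_sub (by apply Continuous.intervalIntegrable; fun_prop)
      (by apply Continuous.intervalIntegrable; fun_prop), ih, ih,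
      show k + 1 + m + 1 = k + m + 1 + 1 by ring, show k + (m + 1) + 1 = k + m + 1 + 1 by ring]
    simp only [Nat.factorial_succ, Nat.cast_mul, Nat.cast_add, Nat.cast_one]
    field_simp
    ring

theorem integral_min_pow_mul_one_sub_max_pow (k m : ℕ) {A B : ℝ} (hA : 0 ≤ A) (hAB : A ≤ B)
    (hB : B ≤ 1) :
    ∫ s in (0 : ℝ)..1, min s A ^ k * (1 - max s B) ^ m =
      A ^ k * (1 - B) ^ m - k / (k + 1) * (A ^ (k + 1) * (1 - B) ^ m)
        - m / (m + 1) * (A ^ k * (1 - B) ^ (m + 1)) := by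
  have hc : Continuous fun s : ℝ => min s A ^ k * (1 - max s B) ^ m := by fun_prop
  rw [← integral_add_adjacent_intervals (hc.intervalIntegrable 0 A) (hc.intervalIntegrable A 1),
    ← integral_add_adjacent_intervals (hc.intervalIntegrable A B) (hc.intervalIntegrable B 1)]
  have h₁ : ∫ s in (0 : ℝ)..A, min s A ^ k * (1 - max s B) ^ m =
      A ^ (k + 1) / (k + 1) * (1 - B) ^ m := by
    rw [integral_congr (g := fun s => s ^ k * (1 - B) ^ m), integral_mul_const, integral_pow]
    · simp
    intro s hs
    rw [uIcc_of_le hA] at hs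
    simp [min_eq_left hs.2, max_eq_right (hs.2.trans hAB)]
  have h₂ : ∫ s in A..B, min s A ^ k * (1 - max s B) ^ m = (B - A) * (A ^ k * (1 - B) ^ m) := by
    rw [integral_congr (g := fun _ => A ^ k * (1 - B) ^ m), integral_const, smul_eq_mul]
    intro s hs
    rw [uIcc_of_le hAB] at hs
    simp [min_eq_right hs.1, max_eq_right hs.2]
  have h₃ : ∫ s in B..1, min s A ^ k * (1 - max s B) ^ m =
      A ^ k * ((1 - B) ^ (m + 1) / (m + 1)) := by
    rw [integral_congr (g := fun s => A ^ k * (1 - s) ^ m), integral_const_mul,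
      integral_comp_sub_left (fun s => s ^ m), integral_pow]
    · simp
    intro s hs
    rw [uIcc_of_le hB] at hs
    simp [min_eq_right (hAB.trans hs.1), max_eq_left hs.1]
  rw [h₁, h₂, h₃]
  field_simp
  ring

end intervalIntegral

theorem setLIntegral_Ioc_ofReal_eq_ofReal_integral {f : ℝ → ℝ} {a b : ℝ} (hab : a ≤ b)
    (hf : Continuous f) (hf₀ : ∀ s ∈ Ioc a b, 0 ≤ f s) :
    ∫⁻ s in Ioc a b, ENNReal.ofReal (f s) = ENNReal.ofReal (∫ s in a..b, f s) := by
  rw [intervalIntegral.integral_of_le hab, ofReal_integral_eq_lintegral_ofReal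
    hf.integrableOn_Ioc ((ae_restrict_iff' measurableSet_Ioc).2 (.of_forall hf₀))]

theorem lintegral_min_pow_mul_one_sub_max_pow (k m : ℕ) {A B : ℝ} (hA : 0 ≤ A) (hAB : A ≤ B)
    (hB : B ≤ 1) :
    (∫⁻ s in Ioc 0 1, ENNReal.ofReal (min s A ^ k * (1 - max s B) ^ m))
      + ENNReal.ofReal (k / (k + 1) * (A ^ (k + 1) * (1 - B) ^ m))
      + ENNReal.ofReal (m / (m + 1) * (A ^ k * (1 - B) ^ (m + 1)))
      = ENNReal.ofReal (A ^ k * (1 - B) ^ m) := by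
  have hB' : 0 ≤ 1 - B := by linarith
  have hf₀ (s : ℝ) (hs : s ∈ Icc 0 1) : 0 ≤ min s A ^ k * (1 - max s B) ^ m :=
    mul_nonneg (pow_nonneg (le_min hs.1 hA) k) (pow_nonneg (sub_nonneg.2 (max_le hs.2 hB)) m)
  have hY (i a b : ℕ) : 0 ≤ (i : ℝ) / (i + 1) * (A ^ a * (1 - B) ^ b) :=
    mul_nonneg (by positivity) (mul_nonneg (pow_nonneg hA a) (pow_nonneg hB' b))
  rw [setLIntegral_Ioc_ofReal_eq_ofReal_integral zero_le_one (by fun_prop)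
      (fun s hs => hf₀ s (Ioc_subset_Icc_self hs)),
    ← ENNReal.ofReal_add (intervalIntegral.integral_nonneg zero_le_one hf₀) (hY _ _ _),
    ← ENNReal.ofReal_add (add_nonneg (intervalIntegral.integral_nonneg zero_le_one hf₀) (hY _ _ _))
      (hY _ _ _),
    intervalIntegral.integral_min_pow_mul_one_sub_max_pow k m hA hAB hB]
  ring_nf

theorem ciInf_fin_cons {n : ℕ} (s : ℝ) (t : Fin (n + 1) → ℝ) :
    ⨅ j, (Fin.cons s t : Fin (n + 1 + 1) → ℝ) j = min s (⨅ j, t j) := by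
  refine le_antisymm (le_min ?_ (le_ciInf fun j => ?_)) (le_ciInf fun j => ?_)
  · simpa using ciInf_le (Finite.bddBelow_range (Fin.cons s t : Fin (n + 1 + 1) → ℝ)) 0
  · simpa using ciInf_le (Finite.bddBelow_range (Fin.cons s t : Fin (n + 1 + 1) → ℝ)) j.succ
  · refine Fin.cases (by simp) (fun j => ?_) j
    simpa using (min_le_right _ _).trans (ciInf_le (Finite.bddBelow_range t) j)

theorem ciSup_fin_cons {n : ℕ} (s : ℝ) (t : Fin (n + 1) → ℝ) :
    ⨆ j, (Fin.cons s t : Fin (n + 1 + 1) → ℝ) j = max s (⨆ j, t j) := by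
  refine le_antisymm (ciSup_le fun j => ?_) (max_le ?_ (ciSup_le fun j => ?_))
  · refine Fin.cases (by simp) (fun j => ?_) j
    simpa using (le_ciSup (Finite.bddAbove_range t) j).trans (le_max_right _ _)
  · simpa using le_ciSup (Finite.bddAbove_range (Fin.cons s t : Fin (n + 1 + 1) → ℝ)) 0
  · simpa using le_ciSup (Finite.bddAbove_range (Fin.cons s t : Fin (n + 1 + 1) → ℝ)) j.succ

theorem lintegral_pi_fin_succ {α : Type*} [MeasurableSpace α] (μ : Measure α) [SigmaFinite μ]
    {n : ℕ} {f : (Fin (n + 1) → α) → ℝ≥0∞} (hf : Measurable f) :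
    ∫⁻ t, f t ∂Measure.pi (fun _ => μ) =
      ∫⁻ t, ∫⁻ s, f (Fin.cons s t) ∂μ ∂Measure.pi (fun _ => μ) := by
  set e := MeasurableEquiv.piFinSuccAbove (fun _ : Fin (n + 1) => α) 0
  have he := (measurePreserving_piFinSuccAbove (fun _ : Fin (n + 1) => μ) 0).symm
  rw [← he.lintegral_comp hf,
    lintegral_prod_symm (fun z => f (e.symm z)) (hf.comp he.measurable).aemeasurable]
  simp [e, MeasurableEquiv.piFinSuccAbove_symm_apply, Fin.insertNthEquiv, Fin.insertNth_zero']

theorem ae_pi_restrict_forall_mem {ι α : Type*} [Fintype ι] [MeasurableSpace α]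
    (μ : Measure α) [SigmaFinite μ] {s : Set α} (hs : MeasurableSet s) :
    ∀ᵐ t ∂Measure.pi (fun _ : ι => μ.restrict s), ∀ j, t j ∈ s :=
  Filter.eventually_all.2 fun _ => Measure.tendsto_eval_ae_ae.eventually (ae_restrict_mem hs)

noncomputable def minMaxMoment (p k m : ℕ) : ℝ≥0∞ :=
  ∫⁻ t : Fin (p + 1) → ℝ, ENNReal.ofReal ((⨅ j, t j) ^ k * (1 - ⨆ j, t j) ^ m)
    ∂Measure.pi fun _ => volume.restrict (Ioc 0 1)

theorem measurable_minMaxMoment_integrand (n k m : ℕ) :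
    Measurable fun t : Fin n → ℝ => ENNReal.ofReal ((⨅ j, t j) ^ k * (1 - ⨆ j, t j) ^ m) :=
  (((Measurable.iInf measurable_pi_apply).pow_const k).mul
    ((measurable_const.sub (Measurable.iSup measurable_pi_apply)).pow_const m)).ennreal_ofReal

theorem minMaxMoment_zero (k m : ℕ) :
    minMaxMoment 0 k m = ENNReal.ofReal (k ! * m ! / (k + m + 1)!) := by
  have h := (measurePreserving_funUnique (volume.restrict (Ioc (0 : ℝ) 1)) (Fin 1)).lintegral_comp
    (f := fun s => ENNReal.ofReal (s ^ k * (1 - s) ^ m)) (by fun_prop)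
  simp only [MeasurableEquiv.funUnique_apply] at h
  rw [minMaxMoment]
  change ∫⁻ t : Fin 1 → ℝ, ENNReal.ofReal ((⨅ j, t j) ^ k * (1 - ⨆ j, t j) ^ m)
    ∂Measure.pi (fun _ => volume.restrict (Ioc (0 : ℝ) 1)) = _
  simp only [ciInf_unique, ciSup_unique, Fin.default_eq_zero] at h ⊢
  refine h.trans ?_
  rw [setLIntegral_Ioc_ofReal_eq_ofReal_integral zero_le_one (by fun_prop)
    (fun s hs => mul_nonneg (pow_nonneg hs.1.le k) (pow_nonneg (sub_nonneg.2 hs.2) m)),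
    intervalIntegral.integral_pow_mul_one_sub_pow]

theorem minMaxMoment_succ (p k m : ℕ) :
    minMaxMoment (p + 1) k m + (ENNReal.ofReal (k / (k + 1)) * minMaxMoment p (k + 1) m
      + ENNReal.ofReal (m / (m + 1)) * minMaxMoment p k (m + 1)) = minMaxMoment p k m := by
  simp only [minMaxMoment]
  rw [lintegral_pi_fin_succ _ (measurable_minMaxMoment_integrand _ k m),
    ← lintegral_const_mul _ (measurable_minMaxMoment_integrand _ _ _),
    ← lintegral_const_mul _ (measurable_minMaxMoment_integrand _ _ _),
    ← lintegral_add_right _ ((measurable_minMaxMoment_integrand _ _ _).const_mul _),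
    ← lintegral_add_right _ (((measurable_minMaxMoment_integrand _ _ _).const_mul _).fun_add
      ((measurable_minMaxMoment_integrand _ _ _).const_mul _))]
  refine lintegral_congr_ae ((ae_pi_restrict_forall_mem _ measurableSet_Ioc).mono fun t ht => ?_)
  obtain ⟨h₀, hle, h₁⟩ := zero_lt_ciInf_le_ciSup_le_one ht
  simp only [ciInf_fin_cons, ciSup_fin_cons]
  rw [← ENNReal.ofReal_mul (by positivity), ← ENNReal.ofReal_mul (by positivity), ← add_assoc]
  exact lintegral_min_pow_mul_one_sub_max_pow k m h₀.le hle h₁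

theorem minMaxMoment_eq (p k m : ℕ) :
    minMaxMoment p k m = ENNReal.ofReal (k ! * m ! * (p + 1)! / (k + m + p + 1)!) := by
  induction p generalizing k m with
  | zero => simpa using minMaxMoment_zero k m
  | succ p ih =>
    have h := minMaxMoment_succ p k m
    rw [ih, ih, ih] at h
    rw [ENNReal.eq_sub_of_add_eq (by finiteness) h, ← ENNReal.ofReal_mul (by positivity),
      ← ENNReal.ofReal_mul (by positivity), ← ENNReal.ofReal_add (by positivity) (by positivity),
      ← ENNReal.ofReal_sub _ (by positivity)]
    congr 1
    rw [show k + 1 + m + p + 1 = k + m + p + 1 + 1 by ring,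
      show k + (m + 1) + p + 1 = k + m + p + 1 + 1 by ring,
      show k + m + (p + 1) + 1 = k + m + p + 1 + 1 by ring]
    push_cast [Nat.factorial_succ]
    field_simp
    ring

theorem lintegral_volume_iInter_Ico_pow_eq_sum_minMaxMoment (n p : ℕ) :
    ∫⁻ t, volume (⋂ j, Ico (t j) (t j + 1)) ^ n
        ∂Measure.pi (fun _ : Fin (p + 1) => volume.restrict (Ioc (0 : ℝ) 1)) =
      ∑ k ∈ Finset.range (n + 1), minMaxMoment p k (n - k) * n.choose k := by
  have hpt : ∀ᵐ t ∂Measure.pi (fun _ : Fin (p + 1) => volume.restrict (Ioc (0 : ℝ) 1)),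
      volume (⋂ j, Ico (t j) (t j + 1)) ^ n = ∑ k ∈ Finset.range (n + 1),
        ENNReal.ofReal ((⨅ j, t j) ^ k * (1 - ⨆ j, t j) ^ (n - k)) * n.choose k := by
    filter_upwards [ae_pi_restrict_forall_mem _ measurableSet_Ioc] with t ht
    obtain ⟨h₀, -, h₁⟩ := zero_lt_ciInf_le_ciSup_le_one ht
    have hterm (k : ℕ) : 0 ≤ (⨅ j, t j) ^ k * (1 - ⨆ j, t j) ^ (n - k) :=
      mul_nonneg (pow_nonneg h₀.le _) (pow_nonneg (sub_nonneg.2 h₁) _)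
    rw [iInter_Ico_add_eq, Real.volume_Ico, ← ENNReal.ofReal_pow (by linarith),
      show (⨅ j, t j) + 1 - ⨆ j, t j = (⨅ j, t j) + (1 - ⨆ j, t j) by ring, add_pow,
      ENNReal.ofReal_sum_of_nonneg]
    · congr 1 with k
      rw [ENNReal.ofReal_mul (hterm k), ENNReal.ofReal_natCast]
    · exact fun k _ => mul_nonneg (hterm k) (Nat.cast_nonneg _)
  rw [lintegral_congr_ae hpt, lintegral_finsetSum _ fun k _ =>
    (measurable_minMaxMoment_integrand _ _ _).mul_const _]
  simp_rw [lintegral_mul_const _ (measurable_minMaxMoment_integrand _ _ _), minMaxMoment]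

theorem sum_minMaxMoment_mul_choose (n p : ℕ) :
    ∑ k ∈ Finset.range (n + 1), minMaxMoment p k (n - k) * n.choose k =
      ENNReal.ofReal ((n + 1) * n ! * (p + 1)! / (n + p + 1)!) := by
  have hterm : ∀ k ∈ Finset.range (n + 1), minMaxMoment p k (n - k) * n.choose k =
      ENNReal.ofReal (n ! * (p + 1)! / (n + p + 1)!) := by
    intro k hk
    have hkn : k ≤ n := Nat.lt_succ_iff.1 (Finset.mem_range.1 hk)
    rw [minMaxMoment_eq, ← ENNReal.ofReal_natCast, ← ENNReal.ofReal_mul (by positivity),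
      Nat.add_sub_cancel' hkn, ← Nat.choose_mul_factorial_mul_factorial hkn]
    congr 1
    push_cast
    ring
  rw [Finset.sum_congr rfl hterm, Finset.sum_const, Finset.card_range, nsmul_eq_mul,
    ← ENNReal.ofReal_natCast, ← ENNReal.ofReal_mul (by positivity)]
  congr 1
  push_cast
  ring

theorem integral_boxSplineD_pow (d p : ℕ) (hd : 1 ≤ d) (hp : 1 ≤ p) :
    ∫ x : Fin d → ℝ, boxSplineD d x ^ p = (d + 1) * d ! * p ! / (d + p)! := by
  obtain ⟨n, rfl⟩ := Nat.exists_eq_add_of_le' hd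
  obtain ⟨q, rfl⟩ := Nat.exists_eq_add_of_le' hp
  have hslice (x : Fin (n + 1) → ℝ) : volume (boxSplineSlice x) ≠ ⊤ :=
    ((measure_mono fun _ hs => hs.1 : volume (boxSplineSlice x) ≤ volume (Ioc (0 : ℝ) 1)).trans_lt
      measure_Ioc_lt_top).ne
  rw [integral_eq_lintegral_of_nonneg_ae
      (.of_forall fun x => pow_nonneg (boxSplineD_eq_measureReal x ▸ measureReal_nonneg) _)
    ((measurable_boxSplineD _).pow_const _).aestronglyMeasurable]
  simp_rw [boxSplineD_eq_measureReal, ENNReal.ofReal_pow measureReal_nonneg,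
    ofReal_measureReal (hslice _)]
  rw [lintegral_volume_boxSplineSlice_pow, lintegral_volume_iInter_Ico_pow_eq_sum_minMaxMoment,
    sum_minMaxMoment_mul_choose, ENNReal.toReal_ofReal (by positivity)]
  push_cast
  ring_nf

/-- `∫_{ℝ^d} D(x)^p dx = (d+1)·C(p+d,d)⁻¹` for every `p ≥ 1`; in particular
`∫ D = 1` and `∫ D² = 2/(d+2)`. -/
theorem boxSpline_integral_pow (d : ℕ) (hd : 1 ≤ d) :
    (∀ p : ℕ, 1 ≤ p →
      ∫ x : Fin d → ℝ, (boxSplineD d x) ^ p = (d + 1) * (((p + d).choose d : ℝ))⁻¹) ∧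
    (∫ x : Fin d → ℝ, boxSplineD d x) = 1 ∧
    (∫ x : Fin d → ℝ, (boxSplineD d x) ^ 2) = 2 / (d + 2) := by
  refine ⟨fun p hp => ?_, ?_, ?_⟩
  · rw [integral_boxSplineD_pow d p hd hp, Nat.cast_choose ℝ (Nat.le_add_left d p),
      Nat.add_sub_cancel, add_comm p d]
    field_simp
  · have h := integral_boxSplineD_pow d 1 hd le_rfl
    simp only [pow_one] at h
    rw [h]
    push_cast [Nat.factorial_succ, Nat.factorial_zero]
    field_simp
  · rw [integral_boxSplineD_pow d 2 hd one_le_two]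
    push_cast [Nat.factorial_succ]
    field_simp
    ring
end

section
/- Let d ≥ 1 and let D : ℝ^d → ℝ be the Cartesian linear box spline. For every ω ∈ ℝ^d such that ω_k ≠ 0 for all 1 ≤ k ≤ d and ω_1 + ⋯ + ω_d ≠ 0, the Fourier transform of D satisfies ∫_{ℝ^d} D(x) e^{−i⟨ω, x⟩} dx = (Π_{k=1}^{d} (1 − e^{−i ω_k})/(i ω_k)) · (1 − e^{−i σ})/(i σ), where σ = ω_1 + ⋯ + ω_d. -/
/-!
Summing over the last sign `ε_{d+1}` first turns each ramp `max 0 m` into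
`max 0 m - max 0 (m - 1) = |(0, 1] ∩ (-∞, m)|`, while inclusion–exclusion over the remaining
signs gives `∏ᵢ 1[t < xᵢ ≤ t + 1] = Σ_ε (-1)^|ε| 1[t < minᵢ (xᵢ - εᵢ)]`. Hence
`D(x) = ∫₀¹ 1[x ∈ (t, t + 1]^d] dt`: the box spline is the unit cube smeared along the diagonal.
By Fubini its Fourier transform is `∫₀¹` of the transform of the cube `(t, t + 1]^d`, which
factors as `e^{-iσt} ∏ₖ (1 - e^{-iωₖ}) / (iωₖ)`, and integrating `e^{-iσt}` over `(0, 1]`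
gives the last factor.
-/

open MeasureTheory Complex

open Set

theorem prod_sub_eq_sum_neg_one_pow_mul_prod {ι R : Type*} [Fintype ι] [DecidableEq ι]
    [CommRing R] (g : ι → Fin 2 → R) :
    ∏ i, (g i 0 - g i 1) = ∑ ε : ι → Fin 2, (-1) ^ (∑ i, (ε i : ℕ)) * ∏ i, g i (ε i) := by
  have h i : g i 0 - g i 1 = ∑ e : Fin 2, (-1) ^ (e : ℕ) * g i e := by
    simp [Fin.sum_univ_two, sub_eq_add_neg]
  simp_rw [h, Fintype.prod_sum, Finset.prod_mul_distrib, Finset.prod_pow_eq_pow_sum]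

theorem lt_ciInf_iff_of_finite {ι α : Type*} [Finite ι] [Nonempty ι]
    [ConditionallyCompleteLinearOrder α] {f : ι → α} {a : α} :
    a < ⨅ i, f i ↔ ∀ i, a < f i := by
  obtain ⟨j, hj⟩ := exists_eq_ciInf_of_finite (f := f)
  exact ⟨fun h i => h.trans_le (ciInf_le (Finite.bddBelow_range f) i), fun h => hj ▸ h j⟩

theorem ciInf_sub_const_of_finite {ι α : Type*} [Finite ι] [Nonempty ι]
    [ConditionallyCompleteLattice α] [AddGroup α] [AddRightMono α] (f : ι → α) (c : α) :
    ⨅ i, (f i - c) = (⨅ i, f i) - c := by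
  simpa [sub_eq_add_neg] using ((OrderIso.addRight (-c)).map_ciInf (Finite.bddBelow_range f)).symm

theorem setIntegral_Ioc_zero_one_ite_lt (m : ℝ) :
    ∫ t in Ioc (0 : ℝ) 1, (if t < m then (1 : ℝ) else 0) = max 0 m - max 0 (m - 1) := by
  have h : (fun t : ℝ => if t < m then (1 : ℝ) else 0) = (Iio m).indicator 1 := by
    ext; simp [indicator_apply]
  rw [h, integral_indicator_one measurableSet_Iio, measureReal_restrict_apply measurableSet_Iio]
  rcases le_or_gt m 1 with hm | hm
  · rw [show Iio m ∩ Ioc 0 1 = Ioo 0 m by ext; grind, Real.volume_real_Ioo]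
    grind
  · rw [show Iio m ∩ Ioc 0 1 = Ioc 0 1 by ext; grind, Real.volume_real_Ioc]
    grind

theorem boxSplineD_eq_sum_max_sub {d : ℕ} [Nonempty (Fin d)] (x : Fin d → ℝ) :
    boxSplineD d x = ∑ ε : Fin d → Fin 2, (-1) ^ (∑ i, (ε i : ℕ)) *
      (max 0 (⨅ i, (x i - (ε i : ℕ))) - max 0 ((⨅ i, (x i - (ε i : ℕ))) - 1)) := by
  rw [boxSplineD, ← Equiv.sum_comp (Fin.snocEquiv fun _ : Fin (d + 1) => Fin 2),
    Fintype.sum_prod_type_right]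
  refine Finset.sum_congr rfl fun ε _ => ?_
  rw [Fin.sum_univ_two]
  simp only [Fin.snocEquiv_apply, Fin.sum_univ_castSucc, Fin.snoc_castSucc, Fin.snoc_last,
    Fin.val_zero, Fin.val_one, Nat.cast_zero, Nat.cast_one, sub_zero, add_zero, pow_succ,
    ciInf_sub_const_of_finite]
  ring

theorem indicator_univ_pi_Ioc_eq_sum {ι : Type*} [Fintype ι] [DecidableEq ι] [Nonempty ι]
    (x : ι → ℝ) (t : ℝ) :
    (univ.pi fun _ => Ioc t (t + 1)).indicator 1 x =
      ∑ ε : ι → Fin 2, (-1) ^ (∑ i, (ε i : ℕ)) *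
        (if t < ⨅ i, (x i - (ε i : ℕ)) then (1 : ℝ) else 0) := by
  calc (univ.pi fun _ => Ioc t (t + 1)).indicator 1 x
      = ∏ i, ((if t < x i - ((0 : Fin 2) : ℕ) then (1 : ℝ) else 0) -
          (if t < x i - ((1 : Fin 2) : ℕ) then 1 else 0)) := by
        rw [← Finset.coe_univ, indicator_pi_one_apply]
        refine Finset.prod_congr rfl fun i _ => ?_
        simp only [indicator_apply, mem_Ioc, Pi.one_apply, Fin.val_zero, Fin.val_one,
          Nat.cast_zero, Nat.cast_one, sub_zero, lt_sub_iff_add_lt']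
        split_ifs <;> grind
    _ = _ := by
        simp_rw [prod_sub_eq_sum_neg_one_pow_mul_prod (fun i (e : Fin 2) =>
          if t < x i - (e : ℕ) then (1 : ℝ) else 0), Fintype.prod_boole, lt_ciInf_iff_of_finite]

theorem boxSplineD_eq_integral {d : ℕ} [Nonempty (Fin d)] (x : Fin d → ℝ) :
    boxSplineD d x = ∫ t in Ioc (0 : ℝ) 1, (univ.pi fun _ => Ioc t (t + 1)).indicator 1 x := by
  have hintegrable (m : ℝ) : Integrable (fun t : ℝ => if t < m then (1 : ℝ) else 0)
      (volume.restrict (Ioc 0 1)) :=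
    .of_bound (Measurable.ite measurableSet_Iio measurable_const measurable_const).aestronglyMeasurable
      1 (.of_forall fun t => by split_ifs <;> simp)
  simp_rw [indicator_univ_pi_Ioc_eq_sum, boxSplineD_eq_sum_max_sub,
    ← setIntegral_Ioc_zero_one_ite_lt, ← integral_const_mul]
  rw [integral_finsetSum _ fun ε _ => (hintegrable _).const_mul _]

theorem setIntegral_Ioc_exp_neg_I_mul {w : ℝ} (hw : w ≠ 0) (a : ℝ) :
    ∫ s in Ioc a (a + 1), exp (-I * (w * s)) =
      exp (-I * (w * a)) * ((1 - exp (-I * w)) / (I * w)) := by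
  have hc : -I * w ≠ 0 := by simp [hw]
  simp_rw [← mul_assoc]
  rw [← intervalIntegral.integral_of_le (by linarith), integral_exp_mul_complex hc]
  push_cast
  rw [mul_add, exp_add]
  field_simp
  ring

theorem integral_indicator_univ_pi_Ioc_exp {ι : Type*} [Fintype ι] {ω : ι → ℝ}
    (hω : ∀ k, ω k ≠ 0) (t : ℝ) :
    ∫ x : ι → ℝ, (univ.pi fun _ => Ioc t (t + 1)).indicator
        (fun x => exp (-I * ∑ k, (ω k : ℂ) * (x k : ℂ))) x =
      exp (-I * ((∑ k, ω k : ℝ) * t)) *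
        ∏ k, (1 - exp (-I * (ω k : ℂ))) / (I * (ω k : ℂ)) := by
  rw [integral_indicator (MeasurableSet.univ_pi fun _ => measurableSet_Ioc), volume_pi,
    Measure.restrict_pi_pi]
  simp_rw [Finset.mul_sum, exp_sum]
  rw [integral_fintype_prod_eq_prod (fun k (s : ℝ) => exp (-I * (ω k * s)))]
  simp_rw [setIntegral_Ioc_exp_neg_I_mul (hω _), Finset.prod_mul_distrib, ← exp_sum]
  push_cast
  rw [Finset.sum_mul, Finset.mul_sum]

theorem integrable_indicator_univ_pi_Ioc_exp {ι : Type*} [Fintype ι] (ω : ι → ℝ) :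
    Integrable (fun p : (ι → ℝ) × ℝ => (univ.pi fun _ => Ioc p.2 (p.2 + 1)).indicator
        (fun x => exp (-I * ∑ k, (ω k : ℂ) * (x k : ℂ))) p.1)
      (volume.prod (volume.restrict (Ioc (0 : ℝ) 1))) := by
  set T := {p : (ι → ℝ) × ℝ | p.1 ∈ univ.pi fun _ => Ioc p.2 (p.2 + 1)}
  have hT : MeasurableSet T := by
    simp only [T, mem_univ_pi, mem_Ioc, ofPred_forall, ofPred_and]
    exact .iInter fun i => (measurableSet_lt (by fun_prop) (by fun_prop)).inter
      (measurableSet_le (by fun_prop) (by fun_prop))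
  have hT_finite : volume.prod (volume.restrict (Ioc (0 : ℝ) 1)) T ≠ ⊤ := by
    have hslice (t : ℝ) : (fun x => (x, t)) ⁻¹' T = univ.pi fun _ => Ioc t (t + 1) := rfl
    simp [Measure.prod_apply_symm hT, hslice, volume_pi_pi]
  change Integrable (T.indicator fun p => exp (-I * ∑ k, (ω k : ℂ) * (p.1 k : ℂ))) _
  rw [integrable_indicator_iff hT]
  have hcont : Continuous fun p : (ι → ℝ) × ℝ => exp (-I * ∑ k, (ω k : ℂ) * (p.1 k : ℂ)) := by
    fun_prop
  refine Measure.integrableOn_of_bounded (M := 1) hT_finite hcont.aestronglyMeasurable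
    (.of_forall fun p => ?_)
  rw [norm_exp]
  simp

theorem boxSpline_fourier_transform_general (d : ℕ) (ω : Fin d → ℝ)
    (hω : ∀ k, ω k ≠ 0) (hσ : (∑ k, ω k) ≠ 0) :
    ∫ x : Fin d → ℝ,
        (boxSplineD d x : ℂ) * Complex.exp (-Complex.I * (∑ k, (ω k : ℂ) * (x k : ℂ))) =
      (∏ k, (1 - Complex.exp (-Complex.I * (ω k : ℂ))) / (Complex.I * (ω k : ℂ))) *
        ((1 - Complex.exp (-Complex.I * ((∑ k, ω k : ℝ) : ℂ))) /
          (Complex.I * ((∑ k, ω k : ℝ) : ℂ))) := by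
  have : Nonempty (Fin d) := by
    obtain ⟨k, -, -⟩ := Finset.exists_ne_zero_of_sum_ne_zero hσ
    exact ⟨k⟩
  have hx (x : Fin d → ℝ) : (boxSplineD d x : ℂ) * exp (-I * ∑ k, (ω k : ℂ) * (x k : ℂ)) =
      ∫ t in Ioc (0 : ℝ) 1, (univ.pi fun _ => Ioc t (t + 1)).indicator
        (fun y => exp (-I * ∑ k, (ω k : ℂ) * (y k : ℂ))) x := by
    rw [boxSplineD_eq_integral, ← integral_complex_ofReal, ← integral_mul_const]
    congr 1 with t
    by_cases h : x ∈ univ.pi fun _ => Ioc t (t + 1) <;> simp [h]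
  simp_rw [hx]
  rw [integral_integral_swap (integrable_indicator_univ_pi_Ioc_exp ω)]
  simp_rw [integral_indicator_univ_pi_Ioc_exp hω]
  have hσ_integral := setIntegral_Ioc_exp_neg_I_mul hσ 0
  rw [zero_add, Complex.ofReal_zero, mul_zero, mul_zero, exp_zero, one_mul] at hσ_integral
  rw [integral_mul_const, hσ_integral, mul_comm]

/-- the Fourier transform of the Cartesian linear box spline is
`Π_{k=1}^{d} (1−e^{−iω_k})/(iω_k) · (1−e^{−iσ})/(iσ)` with `σ = ω_1 + ⋯ + ω_d`, for every
`ω` with nonzero coordinates and nonzero coordinate sum. -/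
theorem boxSpline_fourier_transform (d : ℕ) (hd : 1 ≤ d) (ω : Fin d → ℝ)
    (hω : ∀ k, ω k ≠ 0) (hσ : (∑ k, ω k) ≠ 0) :
    ∫ x : Fin d → ℝ,
        (boxSplineD d x : ℂ) * Complex.exp (-Complex.I * (∑ k, (ω k : ℂ) * (x k : ℂ))) =
      (∏ k, (1 - Complex.exp (-Complex.I * (ω k : ℂ))) / (Complex.I * (ω k : ℂ))) *
        ((1 - Complex.exp (-Complex.I * ((∑ k, ω k : ℝ) : ℂ))) /
          (Complex.I * ((∑ k, ω k : ℝ) : ℂ))) :=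
  boxSpline_fourier_transform_general d ω hω hσ
end
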